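/- arXiv:1602.01720 — 10 statements merged into one kernel-verified Lean document; each statement's English description precedes it below -/
import Mathlib

section
/- Let Av = −f v + c v′ + d v″ denote the local part of L#. Then for every h ∈ C²_c(ℝ): ∫ A(h û_x)(x) · h(x)û_x(x) · ρ(x) dx = −(1/2) ∫ h² (Pû_x) ψ dx − d ∫ (h′)² û_x ψ dx − (1/2) ∫ h² û_x (P*ψ) dx. -/
open MeasureTheory Filter

/-- The nonlocal part `Pv(x) = r(x) (w ∗ (q v))(x)` of the frozen wave operator. -/
noncomputable def Pnl (r q w v : ℝ → ℝ) : ℝ → ℝ :=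
  fun x => r x * ∫ y, w (x - y) * q y * v y

/-- Its adjoint `P*v(x) = q(x) ∫ w(y−x) r(y) v(y) dy`. -/
noncomputable def PnlStar (r q w v : ℝ → ℝ) : ℝ → ℝ :=
  fun x => q x * ∫ y, w (y - x) * r y * v y

/-- The frozen wave operator `L# v = −f v + c v′ + d v″ + P v`. -/
noncomputable def LFW (c d : ℝ) (f r q w v : ℝ → ℝ) : ℝ → ℝ :=
  fun x => -(f x) * v x + c * deriv v x + d * deriv (deriv v) x + Pnl r q w v x

/-- The adjoint frozen wave operator `L#* v = −f v − c v′ + d v″ + P* v`. -/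
noncomputable def LFWStar (c d : ℝ) (f r q w v : ℝ → ℝ) : ℝ → ℝ :=
  fun x => -(f x) * v x - c * deriv v x + d * deriv (deriv v) x + PnlStar r q w v x

/-- The local part `Av = −f v + c v′ + d v″` of the frozen wave operator. -/
noncomputable def Aloc (c d : ℝ) (f v : ℝ → ℝ) : ℝ → ℝ :=
  fun x => -(f x) * v x + c * deriv v x + d * deriv (deriv v) x

/-!
The eigen equations say `P û_x = -A û_x` and `P* ψ = -A* ψ`, where `A* = Aloc (-c) d f` is the formal
adjoint of `A`, and `ρ` cancels `û_x`, so the claim is the Lagrange-type identity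
`∫ A(h u) h ψ = ½∫ h² (A u) ψ - d ∫ (h′)² u ψ + ½∫ h² u (A* ψ)` for arbitrary `C²` functions `u`, `ψ`.
Pointwise, the zeroth-order terms cancel and the difference of the two integrands is the derivative of
the flux `c/2 · h² u ψ + d (h h′ u ψ + ½ h² u′ ψ - ½ h² u ψ′)`, which has compact support since `h`
does, so its integral vanishes.
-/

lemma continuous_Aloc {c d : ℝ} {f u : ℝ → ℝ} (hf : Continuous f) (hu : ContDiff ℝ 2 u) :
    Continuous (Aloc c d f u) := by
  have hu' : ContDiff ℝ 1 (deriv u) := hu.deriv'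
  unfold Aloc
  fun_prop

lemma Aloc_mul {c d : ℝ} {f h u : ℝ → ℝ} (hh : ContDiff ℝ 2 h) (hu : ContDiff ℝ 2 u) (x : ℝ) :
    Aloc c d f (fun t => h t * u t) x = h x * Aloc c d f u x + c * deriv h x * u x
      + d * (deriv (deriv h) x * u x + 2 * deriv h x * deriv u x) := by
  have hh1 : Differentiable ℝ h := hh.differentiable two_ne_zero
  have hu1 : Differentiable ℝ u := hu.differentiable two_ne_zero
  have hderiv : deriv (fun t => h t * u t) = fun t => deriv h t * u t + h t * deriv u t :=
    funext fun t => deriv_fun_mul (hh1 t) (hu1 t)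
  have hderiv2 : HasDerivAt (fun t => deriv h t * u t + h t * deriv u t)
      (deriv (deriv h) x * u x + deriv h x * deriv u x
        + (deriv h x * deriv u x + h x * deriv (deriv u) x)) x :=
    ((hh.differentiable_deriv_two x).hasDerivAt.mul (hu1 x).hasDerivAt).add
      ((hh1 x).hasDerivAt.mul (hu.differentiable_deriv_two x).hasDerivAt)
  simp only [Aloc, hderiv, hderiv2.deriv]
  ring

noncomputable def energyFlux (c d : ℝ) (h u ψ : ℝ → ℝ) (x : ℝ) : ℝ :=
  c / 2 * (h x ^ 2 * u x * ψ x)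
    + d * (h x * deriv h x * u x * ψ x + 1 / 2 * (h x ^ 2 * deriv u x * ψ x)
      - 1 / 2 * (h x ^ 2 * u x * deriv ψ x))

lemma hasDerivAt_energyFlux {c d : ℝ} {f h u ψ : ℝ → ℝ} (hh : ContDiff ℝ 2 h)
    (hu : ContDiff ℝ 2 u) (hψ : ContDiff ℝ 2 ψ) (x : ℝ) :
    HasDerivAt (energyFlux c d h u ψ)
      (Aloc c d f (fun t => h t * u t) x * h x * ψ x
        - (1 / 2 * (h x ^ 2 * (Aloc c d f u x * ψ x)) - d * (deriv h x ^ 2 * (u x * ψ x))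
          + 1 / 2 * (h x ^ 2 * (u x * Aloc (-c) d f ψ x)))) x := by
  have Hh := (hh.differentiable two_ne_zero x).hasDerivAt
  have Hh' := (hh.differentiable_deriv_two x).hasDerivAt
  have Hu := (hu.differentiable two_ne_zero x).hasDerivAt
  have Hu' := (hu.differentiable_deriv_two x).hasDerivAt
  have Hψ := (hψ.differentiable two_ne_zero x).hasDerivAt
  have Hψ' := (hψ.differentiable_deriv_two x).hasDerivAt
  have Hsquare := (((Hh.pow 2).mul Hu).mul Hψ).const_mul (c / 2)
  have Hcross := ((((Hh.mul Hh').mul Hu).mul Hψ).add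
    ((((Hh.pow 2).mul Hu').mul Hψ).const_mul (1 / 2 : ℝ))).sub
      ((((Hh.pow 2).mul Hu).mul Hψ').const_mul (1 / 2 : ℝ))
  have H : HasDerivAt (energyFlux c d h u ψ) _ x := Hsquare.add (Hcross.const_mul d)
  convert H using 1
  rw [Aloc_mul hh hu]
  simp only [Aloc, Pi.mul_apply, Pi.pow_apply]
  ring

lemma integrable_of_vanishing_off_hasCompactSupport {g k : ℝ → ℝ} (hg : Continuous g)
    (hk : HasCompactSupport k) (hvanish : ∀ x, k x = 0 → g x = 0) : Integrable g :=
  hg.integrable_of_hasCompactSupport (hk.mono fun x hx hkx => hx (hvanish x hkx))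

theorem integral_Aloc_mul_mul_eq {c d : ℝ} {f h u ψ : ℝ → ℝ} (hf : Continuous f)
    (hh : ContDiff ℝ 2 h) (hs : HasCompactSupport h) (hu : ContDiff ℝ 2 u)
    (hψ : ContDiff ℝ 2 ψ) :
    ∫ x, Aloc c d f (fun t => h t * u t) x * h x * ψ x =
      1 / 2 * (∫ x, h x ^ 2 * (Aloc c d f u x * ψ x))
        - d * (∫ x, deriv h x ^ 2 * (u x * ψ x))
        + 1 / 2 * (∫ x, h x ^ 2 * (u x * Aloc (-c) d f ψ x)) := by
  have hhc := hh.continuous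
  have hh'c := hh.continuous_deriv one_le_two
  have huc := hu.continuous
  have hψc := hψ.continuous
  have hAhu := continuous_Aloc (c := c) (d := d) hf (hh.mul hu)
  have hAu := continuous_Aloc (c := c) (d := d) hf hu
  have hAψ := continuous_Aloc (c := -c) (d := d) hf hψ
  have hI₀ : Integrable fun x => Aloc c d f (fun t => h t * u t) x * h x * ψ x :=
    integrable_of_vanishing_off_hasCompactSupport (by fun_prop) hs fun x hx => by simp [hx]
  have hI₁ : Integrable fun x => h x ^ 2 * (Aloc c d f u x * ψ x) :=
    integrable_of_vanishing_off_hasCompactSupport (by fun_prop) hs fun x hx => by simp [hx]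
  have hI₂ : Integrable fun x => deriv h x ^ 2 * (u x * ψ x) :=
    integrable_of_vanishing_off_hasCompactSupport (by fun_prop) hs.deriv fun x hx => by simp [hx]
  have hI₃ : Integrable fun x => h x ^ 2 * (u x * Aloc (-c) d f ψ x) :=
    integrable_of_vanishing_off_hasCompactSupport (by fun_prop) hs fun x hx => by simp [hx]
  have hI₁₂ : Integrable fun x => 1 / 2 * (h x ^ 2 * (Aloc c d f u x * ψ x))
      - d * (deriv h x ^ 2 * (u x * ψ x)) :=
    (hI₁.const_mul _).sub (hI₂.const_mul _)
  have hIrhs : Integrable fun x => 1 / 2 * (h x ^ 2 * (Aloc c d f u x * ψ x))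
      - d * (deriv h x ^ 2 * (u x * ψ x)) + 1 / 2 * (h x ^ 2 * (u x * Aloc (-c) d f ψ x)) :=
    hI₁₂.add (hI₃.const_mul _)
  have hflux : Integrable (energyFlux c d h u ψ) :=
    integrable_of_vanishing_off_hasCompactSupport
      (continuous_iff_continuousAt.2 fun x => (hasDerivAt_energyFlux (f := f) hh hu hψ x).continuousAt)
      hs fun x hx => by simp [energyFlux, hx]
  have hzero := integral_eq_zero_of_hasDerivAt_of_integrable
    (hasDerivAt_energyFlux (f := f) hh hu hψ) (hI₀.sub hIrhs) hflux
  rw [integral_sub hI₀ hIrhs, sub_eq_zero] at hzero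
  rw [hzero, integral_add hI₁₂ (hI₃.const_mul _),
    integral_sub (hI₁.const_mul _) (hI₂.const_mul _), integral_const_mul, integral_const_mul,
    integral_const_mul]

theorem stmt_4_general
    (c d : ℝ)
    (f r q : ℝ → ℝ)
    (hf_cont : Continuous f)
    (w : ℝ → ℝ)
    (u ψ : ℝ → ℝ)
    (hu_C2 : ContDiff ℝ 2 u) (hu_pos : ∀ x, 0 < u x)
    (hu_eig : ∀ x, LFW c d f r q w u x = 0)
    (hψ_C2 : ContDiff ℝ 2 ψ)
    (hψ_eig : ∀ x, LFWStar c d f r q w ψ x = 0) :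
    ∀ h : ℝ → ℝ, ContDiff ℝ 2 h → HasCompactSupport h →
      (∫ x, Aloc c d f (fun t => h t * u t) x * (h x * u x) * (ψ x / u x)) =
        -(1 / 2) * (∫ x, (h x) ^ 2 * (Pnl r q w u x * ψ x))
          - d * (∫ x, (deriv h x) ^ 2 * (u x * ψ x))
          - 1 / 2 * (∫ x, (h x) ^ 2 * (u x * PnlStar r q w ψ x)) := by
  intro h hh hs
  have hPu : ∀ x, Pnl r q w u x = -Aloc c d f u x := fun x => by
    have := hu_eig x
    simp only [LFW, Aloc] at this ⊢
    linarith
  have hPψ : ∀ x, PnlStar r q w ψ x = -Aloc (-c) d f ψ x := fun x => by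
    have := hψ_eig x
    simp only [LFWStar, Aloc] at this ⊢
    linarith
  have hρ : ∀ x, Aloc c d f (fun t => h t * u t) x * (h x * u x) * (ψ x / u x)
      = Aloc c d f (fun t => h t * u t) x * h x * ψ x := fun x => by
    field_simp [(hu_pos x).ne']
  simp only [hρ, hPu, hPψ, neg_mul, mul_neg, integral_neg,
    integral_Aloc_mul_mul_eq hf_cont hh hs hu_C2 hψ_C2]
  ring

/-- Representation (2.1) of the local energy as a sum of squares: for `h ∈ C²_c(ℝ)`,
`∫ A(h û_x) h û_x ρ dx = −½∫ h² (Pû_x) ψ dx − d ∫ (h′)² û_x ψ dx − ½∫ h² û_x (P*ψ) dx`. -/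
theorem stmt_4
    (c d : ℝ) (hd : 0 ≤ d)
    (f r q : ℝ → ℝ)
    (hf_cont : Continuous f) (hr_cont : Continuous r) (hq_cont : Continuous q)
    (hf_bdd : ∃ C, ∀ x, |f x| ≤ C) (hr_bdd : ∃ C, ∀ x, |r x| ≤ C)
    (hq_bdd : ∃ C, ∀ x, |q x| ≤ C)
    (hr_inf : ∃ ε > 0, ∀ x, ε ≤ r x) (hq_inf : ∃ ε > 0, ∀ x, ε ≤ q x)
    (w : ℝ → ℝ) (hw_meas : Measurable w) (hw_nonneg : ∀ x, 0 ≤ w x)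
    (hw_int : Integrable w) (hw_prob : (∫ x, w x) = 1)
    (w' : ℝ → ℝ) (hw_diff : ∀ᵐ x ∂(volume : Measure ℝ), HasDerivAt w (w' x) x)
    (hw'_int : Integrable w')
    (u ψ : ℝ → ℝ)
    (hu_C2 : ContDiff ℝ 2 u) (hu_pos : ∀ x, 0 < u x)
    (hu_L2 : MemLp u 2 volume) (hu'_L2 : MemLp (deriv u) 2 volume)
    (hu''_L2 : MemLp (deriv (deriv u)) 2 volume)
    (hu_eig : ∀ x, LFW c d f r q w u x = 0)
    (hψ_C2 : ContDiff ℝ 2 ψ) (hψ_pos : ∀ x, 0 < ψ x)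
    (hψ_L2 : MemLp ψ 2 volume) (hψ'_L2 : MemLp (deriv ψ) 2 volume)
    (hψ''_L2 : MemLp (deriv (deriv ψ)) 2 volume)
    (hψ_eig : ∀ x, LFWStar c d f r q w ψ x = 0)
    (hnorm : (∫ x, u x * ψ x) = 1) :
    ∀ h : ℝ → ℝ, ContDiff ℝ 2 h → HasCompactSupport h →
      (∫ x, Aloc c d f (fun t => h t * u t) x * (h x * u x) * (ψ x / u x)) =
        -(1 / 2) * (∫ x, (h x) ^ 2 * (Pnl r q w u x * ψ x))
          - d * (∫ x, (deriv h x) ^ 2 * (u x * ψ x))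
          - 1 / 2 * (∫ x, (h x) ^ 2 * (u x * PnlStar r q w ψ x)) :=
  stmt_4_general c d f r q hf_cont w u ψ hu_C2 hu_pos hu_eig hψ_C2 hψ_eig
end

section
/- Assume that w > 0 on a neighborhood of 0, that û_x is three times differentiable, and that m := sup_x |û_x″(x)/û_x(x)| < ∞ and m₃ := sup_x |û_x‴(x)/û_x(x)| < ∞. Then for all x ∈ ℝ: δ₁ û_x(x) ≤ Pû_x(x) ≤ δ₂ û_x(x), where δ₁ = (inf r)(inf q) ∫_{−∞}^0 w(y) e^{m y} dy > 0 and δ₂ = ‖f‖_∞ + |c| m + d m₃. -/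
open MeasureTheory Filter Set

/-!
The bound `|u'| ≤ m u` says that `log u` is `m`-Lipschitz, which gives the Harnack-type
comparison `u y ≥ u x e^{-m|y - x|}`. Comparing `u` on `(x, x + 1]` with its `L²` norm shows
that `u` is bounded, so the convolution integrands are integrable. Restricting `∫ w(x - y) u(y) dy`
to `y > x` and using the comparison there gives the lower bound; the upper bound is read off
from the eigenvalue equation `Pu = f u - c u' - d u''`.
-/

open Real

theorem abs_log_sub_log_le_of_abs_deriv_le {u : ℝ → ℝ} {m : ℝ} (hu : Differentiable ℝ u)
    (hu_pos : ∀ x, 0 < u x) (hm : ∀ x, |deriv u x| ≤ m * u x) (x y : ℝ) :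
    |log (u y) - log (u x)| ≤ m * |y - x| := by
  have hlog z : HasDerivAt (fun t => log (u t)) (deriv u z / u z) z :=
    (hu z).hasDerivAt.log (hu_pos z).ne'
  have hbound : ∀ z ∈ univ, ‖deriv (fun t => log (u t)) z‖ ≤ m := fun z _ => by
    rw [(hlog z).deriv, norm_eq_abs, abs_div, abs_of_pos (hu_pos z), div_le_iff₀ (hu_pos z)]
    exact hm z
  simpa only [norm_eq_abs] using Convex.norm_image_sub_le_of_norm_deriv_le
    (fun z _ => (hlog z).differentiableAt) hbound convex_univ (mem_univ x) (mem_univ y)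

theorem mul_exp_neg_le_of_abs_deriv_le {u : ℝ → ℝ} {m : ℝ} (hu : Differentiable ℝ u)
    (hu_pos : ∀ x, 0 < u x) (hm : ∀ x, |deriv u x| ≤ m * u x) (x y : ℝ) :
    u x * exp (-(m * |y - x|)) ≤ u y := by
  have hlog := (abs_le.mp (abs_log_sub_log_le_of_abs_deriv_le hu hu_pos hm x y)).1
  calc u x * exp (-(m * |y - x|)) = exp (log (u x) - m * |y - x|) := by
        rw [exp_sub, exp_log (hu_pos x), exp_neg, div_eq_mul_inv]
    _ ≤ exp (log (u y)) := exp_le_exp.mpr (by linarith)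
    _ = u y := exp_log (hu_pos y)

theorem le_exp_mul_sqrt_integral_sq {u : ℝ → ℝ} {m : ℝ} (hm : 0 ≤ m) (hu_nonneg : ∀ x, 0 ≤ u x)
    (hu : MemLp u 2 volume) (hcmp : ∀ x y, u x * exp (-(m * |y - x|)) ≤ u y) (x : ℝ) :
    u x ≤ exp m * √(∫ y, u y ^ 2) := by
  set a := u x * exp (-m)
  have ha : 0 ≤ a := mul_nonneg (hu_nonneg x) (exp_pos _).le
  have ha_le : ∀ y ∈ Ioc x (x + 1), a ^ 2 ≤ u y ^ 2 := fun y hy => by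
    have hdist : |y - x| ≤ 1 := by rw [abs_of_pos (sub_pos.mpr hy.1)]; linarith [hy.2]
    have hexp : exp (-m) ≤ exp (-(m * |y - x|)) := exp_le_exp.mpr (by nlinarith)
    exact pow_le_pow_left₀ ha
      ((mul_le_mul_of_nonneg_left hexp (hu_nonneg x)).trans (hcmp x y)) 2
  have ha_sq : a ^ 2 ≤ ∫ y, u y ^ 2 :=
    calc a ^ 2 = ∫ _ in Ioc x (x + 1), a ^ 2 := by simp
      _ ≤ ∫ y in Ioc x (x + 1), u y ^ 2 := setIntegral_mono_on
          (integrableOn_const measure_Ioc_lt_top.ne) hu.integrable_sq.integrableOn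
          measurableSet_Ioc ha_le
      _ ≤ ∫ y, u y ^ 2 := setIntegral_le_integral hu.integrable_sq (ae_of_all _ fun y => sq_nonneg _)
  calc u x = exp m * a := by rw [mul_left_comm, ← exp_add]; simp
    _ ≤ exp m * √(∫ y, u y ^ 2) :=
        mul_le_mul_of_nonneg_left
          ((le_sqrt ha (integral_nonneg fun _ => sq_nonneg _)).mpr ha_sq) (exp_pos m).le

theorem integrable_comp_sub_mul {w g : ℝ → ℝ} {C : ℝ} (hw : Integrable w)
    (hg : AEStronglyMeasurable g volume) (hC : ∀ y, |g y| ≤ C) (x : ℝ) :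
    Integrable (fun y => w (x - y) * g y) :=
  (hw.comp_sub_left x).mul_bdd hg (ae_of_all _ hC)

theorem integrableOn_Iio_mul_exp {w : ℝ → ℝ} {m : ℝ} (hw : Integrable w) (hm : 0 ≤ m) :
    IntegrableOn (fun z => w z * exp (m * z)) (Iio 0) := by
  refine hw.restrict.mul_bdd (by fun_prop) (c := 1)
    ((ae_restrict_iff' measurableSet_Iio).mpr (ae_of_all _ fun z (hz : z < 0) => ?_))
  rw [norm_eq_abs, abs_of_pos (exp_pos _)]
  exact exp_le_one_iff.mpr (by nlinarith)

theorem setIntegral_Iio_mul_exp_pos {w : ℝ → ℝ} {m : ℝ} (hw_nonneg : ∀ x, 0 ≤ w x)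
    (hw : Integrable w) (hw_pos0 : ∃ ε > 0, ∀ x : ℝ, |x| < ε → 0 < w x) (hm : 0 ≤ m) :
    0 < ∫ z in Iio 0, w z * exp (m * z) := by
  obtain ⟨ε, hε, hwε⟩ := hw_pos0
  rw [setIntegral_pos_iff_support_of_nonneg_ae
    (ae_of_all _ fun z => mul_nonneg (hw_nonneg z) (exp_pos _).le)
    (integrableOn_Iio_mul_exp hw hm)]
  have hsupp : Ioo (-ε) 0 ⊆ Function.support (fun z => w z * exp (m * z)) ∩ Iio 0 :=
    fun z hz => ⟨(mul_pos (hwε z (abs_lt.mpr ⟨hz.1, hz.2.trans hε⟩)) (exp_pos _)).ne', hz.2⟩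
  calc (0 : ENNReal) < volume (Ioo (-ε) 0) := by simpa using hε
    _ ≤ _ := measure_mono hsupp

theorem setIntegral_Iio_mul_exp_mul_le_integral {w u : ℝ → ℝ} {m x : ℝ}
    (hw_nonneg : ∀ x, 0 ≤ w x) (hu_nonneg : ∀ x, 0 ≤ u x) (hw : Integrable w) (hm : 0 ≤ m)
    (hwu : Integrable (fun y => w (x - y) * u y))
    (hcmp : ∀ z < 0, u x * exp (m * z) ≤ u (x - z)) :
    (∫ z in Iio 0, w z * exp (m * z)) * u x ≤ ∫ y, w (x - y) * u y := by
  have hflip : ∫ y, w (x - y) * u y = ∫ z, w z * u (x - z) := by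
    simpa using integral_sub_left_eq_self (fun z => w z * u (x - z)) volume x
  have hwu' : Integrable (fun z => w z * u (x - z)) := by
    simpa using hwu.comp_sub_left x
  rw [hflip, ← integral_mul_const]
  calc ∫ z in Iio 0, w z * exp (m * z) * u x
      ≤ ∫ z in Iio 0, w z * u (x - z) :=
        setIntegral_mono_on ((integrableOn_Iio_mul_exp hw hm).mul_const _) hwu'.integrableOn
          measurableSet_Iio fun z (hz : z < 0) => by
            rw [mul_assoc, mul_comm (exp _)]
            exact mul_le_mul_of_nonneg_left (hcmp z hz) (hw_nonneg z)
    _ ≤ ∫ z, w z * u (x - z) :=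
        setIntegral_le_integral hwu' (ae_of_all _ fun z => mul_nonneg (hw_nonneg z) (hu_nonneg _))

theorem mul_le_Pnl {r q w u : ℝ → ℝ} {r₀ q₀ δ x : ℝ} (hr₀ : 0 ≤ r₀) (hq₀ : 0 ≤ q₀)
    (hr : r₀ ≤ r x) (hq : ∀ y, q₀ ≤ q y) (hw_nonneg : ∀ x, 0 ≤ w x) (hu_nonneg : ∀ x, 0 ≤ u x)
    (hwu : Integrable (fun y => w (x - y) * u y))
    (hwqu : Integrable (fun y => w (x - y) * q y * u y))
    (hconv : δ * u x ≤ ∫ y, w (x - y) * u y) :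
    r₀ * q₀ * δ * u x ≤ Pnl r q w u x := by
  have hq_mono : q₀ * ∫ y, w (x - y) * u y ≤ ∫ y, w (x - y) * q y * u y := by
    rw [← integral_const_mul]
    refine integral_mono (hwu.const_mul q₀) hwqu fun y => ?_
    simpa only [mul_comm, mul_left_comm] using
      mul_le_mul_of_nonneg_right (hq y) (mul_nonneg (hw_nonneg (x - y)) (hu_nonneg y))
  have hint_nonneg : 0 ≤ ∫ y, w (x - y) * q y * u y := integral_nonneg fun y =>
    mul_nonneg (mul_nonneg (hw_nonneg _) (hq₀.trans (hq y))) (hu_nonneg y)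
  calc r₀ * q₀ * δ * u x = r₀ * (q₀ * (δ * u x)) := by ring
    _ ≤ r₀ * ∫ y, w (x - y) * q y * u y := mul_le_mul_of_nonneg_left
        ((mul_le_mul_of_nonneg_left hconv hq₀).trans hq_mono) hr₀
    _ ≤ Pnl r q w u x := mul_le_mul_of_nonneg_right hr hint_nonneg

theorem le_of_neg_mul_add_mul_add_mul_add_eq_zero {P φ u v₁ v₂ c d F m m₃ : ℝ}
    (h : -φ * u + c * v₁ + d * v₂ + P = 0) (hd : 0 ≤ d) (hu : 0 ≤ u) (hφ : |φ| ≤ F)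
    (hv₁ : |v₁| ≤ m * u) (hv₂ : |v₂| ≤ m₃ * u) :
    P ≤ (F + |c| * m + d * m₃) * u := by
  have h₀ : φ * u ≤ F * u := mul_le_mul_of_nonneg_right ((le_abs_self φ).trans hφ) hu
  have h₁ : -(c * v₁) ≤ |c| * (m * u) :=
    (neg_le_abs _).trans ((abs_mul c v₁).trans_le (mul_le_mul_of_nonneg_left hv₁ (abs_nonneg c)))
  have h₂ : -(d * v₂) ≤ d * (m₃ * u) :=
    (neg_le_abs _).trans (by rw [abs_mul, abs_of_nonneg hd]; exact mul_le_mul_of_nonneg_left hv₂ hd)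
  linarith

theorem stmt_6_general
    (c d : ℝ) (hd : 0 ≤ d)
    (f r q : ℝ → ℝ)
    (hq_cont : Continuous q)
    (F : ℝ) (hF : ∀ x, |f x| ≤ F)
    (r₀ q₀ : ℝ) (hr₀ : 0 < r₀) (hq₀ : 0 < q₀)
    (hr : ∀ x, r₀ ≤ r x) (hq : ∀ x, q₀ ≤ q x)
    (hq_bdd : ∃ C, ∀ x, |q x| ≤ C)
    (w : ℝ → ℝ) (hw_nonneg : ∀ x, 0 ≤ w x)
    (hw_int : Integrable w)
    (hw_pos0 : ∃ ε > 0, ∀ x : ℝ, |x| < ε → 0 < w x)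
    (u : ℝ → ℝ) (hu_pos : ∀ x, 0 < u x)
    (hu_L2 : MemLp u 2 volume)
    (hu_d1 : Differentiable ℝ u)
    (m m₃ : ℝ) (hm_nonneg : 0 ≤ m)
    (hm : ∀ x, |deriv u x| ≤ m * u x)
    (hm₃ : ∀ x, |deriv (deriv u) x| ≤ m₃ * u x)
    (hu_eig : ∀ x, -(f x) * u x + c * deriv u x + d * deriv (deriv u) x
      + Pnl r q w u x = 0) :
    0 < r₀ * q₀ * ∫ y in Iio (0 : ℝ), w y * Real.exp (m * y) ∧
    ∀ x, (r₀ * q₀ * ∫ y in Iio (0 : ℝ), w y * Real.exp (m * y)) * u x ≤ Pnl r q w u x ∧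
      Pnl r q w u x ≤ (F + |c| * m + d * m₃) * u x := by
  obtain ⟨Cq, hCq⟩ := hq_bdd
  have hu_nonneg x := (hu_pos x).le
  have hcmp := mul_exp_neg_le_of_abs_deriv_le hu_d1 hu_pos hm
  set U := exp m * √(∫ y, u y ^ 2)
  have hu_le : ∀ x, |u x| ≤ U := fun x => by
    rw [abs_of_pos (hu_pos x)]
    exact le_exp_mul_sqrt_integral_sq hm_nonneg hu_nonneg hu_L2 hcmp x
  have hwu := integrable_comp_sub_mul hw_int hu_d1.continuous.aestronglyMeasurable hu_le
  have hwqu x : Integrable (fun y => w (x - y) * q y * u y) := by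
    simpa only [mul_assoc, Pi.mul_apply] using integrable_comp_sub_mul hw_int
      (hq_cont.mul hu_d1.continuous).aestronglyMeasurable (C := Cq * U)
      (fun y => (abs_mul _ _).trans_le (mul_le_mul (hCq y) (hu_le y) (abs_nonneg _)
        ((abs_nonneg _).trans (hCq y)))) x
  refine ⟨by have := setIntegral_Iio_mul_exp_pos hw_nonneg hw_int hw_pos0 hm_nonneg; positivity,
    fun x => ⟨mul_le_Pnl hr₀.le hq₀.le (hr x) hq hw_nonneg hu_nonneg (hwu x) (hwqu x) ?_,
      le_of_neg_mul_add_mul_add_mul_add_eq_zero (hu_eig x) hd (hu_nonneg x) (hF x) (hm x) (hm₃ x)⟩⟩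
  refine setIntegral_Iio_mul_exp_mul_le_integral hw_nonneg hu_nonneg hw_int hm_nonneg (hwu x)
    fun z hz => ?_
  simpa [abs_of_neg hz] using hcmp x (x - z)

/-- Step (I) of the proof of Theorem 3.4: if `w > 0` near `0`, `û_x` is three times
differentiable with `|û_x′| ≤ m û_x` and `|û_x″| ≤ m₃ û_x` (the bounds
`‖û_xx/û_x‖_∞ ≤ m`, `‖û_xxx/û_x‖_∞ ≤ m₃` of the paper), then
`δ₁ û_x ≤ Pû_x ≤ δ₂ û_x` with `δ₁ = (inf r)(inf q) ∫_{−∞}^0 w(y) e^{m y} dy > 0`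
and `δ₂ = ‖f‖_∞ + |c| m + d m₃`. -/
theorem stmt_6
    (c d : ℝ) (hd : 0 ≤ d)
    (f r q : ℝ → ℝ)
    (hf_cont : Continuous f) (hr_cont : Continuous r) (hq_cont : Continuous q)
    (F : ℝ) (hF : ∀ x, |f x| ≤ F)
    (r₀ q₀ : ℝ) (hr₀ : 0 < r₀) (hq₀ : 0 < q₀)
    (hr : ∀ x, r₀ ≤ r x) (hq : ∀ x, q₀ ≤ q x)
    (hr_bdd : ∃ C, ∀ x, |r x| ≤ C) (hq_bdd : ∃ C, ∀ x, |q x| ≤ C)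
    (w : ℝ → ℝ) (hw_meas : Measurable w) (hw_nonneg : ∀ x, 0 ≤ w x)
    (hw_int : Integrable w) (hw_prob : (∫ x, w x) = 1)
    (hw_pos0 : ∃ ε > 0, ∀ x : ℝ, |x| < ε → 0 < w x)
    (u : ℝ → ℝ) (hu_pos : ∀ x, 0 < u x)
    (hu_L2 : MemLp u 2 volume) (hu'_L2 : MemLp (deriv u) 2 volume)
    (hu''_L2 : MemLp (deriv (deriv u)) 2 volume)
    (hu_d1 : Differentiable ℝ u) (hu_d2 : Differentiable ℝ (deriv u))
    (hu_d3 : Differentiable ℝ (deriv (deriv u)))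
    (m m₃ : ℝ) (hm_nonneg : 0 ≤ m) (hm₃_nonneg : 0 ≤ m₃)
    (hm : ∀ x, |deriv u x| ≤ m * u x)
    (hm₃ : ∀ x, |deriv (deriv u) x| ≤ m₃ * u x)
    (hu_eig : ∀ x, -(f x) * u x + c * deriv u x + d * deriv (deriv u) x
      + Pnl r q w u x = 0) :
    0 < r₀ * q₀ * ∫ y in Iio (0 : ℝ), w y * Real.exp (m * y) ∧
    ∀ x, (r₀ * q₀ * ∫ y in Iio (0 : ℝ), w y * Real.exp (m * y)) * u x ≤ Pnl r q w u x ∧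
      Pnl r q w u x ≤ (F + |c| * m + d * m₃) * u x :=
  stmt_6_general c d hd f r q hq_cont F hF r₀ q₀ hr₀ hq₀ hr hq hq_bdd w hw_nonneg hw_int hw_pos0 u
    hu_pos hu_L2 hu_d1 m m₃ hm_nonneg hm hm₃ hu_eig
end

section
/- Let μ : ℝ → (0,∞) be measurable and locally integrable, and suppose there exist α, β, k, l > 0 such that μ(x+y) ≤ k e^{−αy} μ(x) and μ(−x−y) ≤ l e^{−βy} μ(−x) for all x ≥ 0, y ≥ 0. Then B₁ := sup_{r>0} ( ∫_r^∞ μ(x) dx ) ( ∫_0^r μ(x)⁻¹ dx ) ≤ k²/α² and B₂ := sup_{r>0} ( ∫_{−∞}^{−r} μ(x) dx ) ( ∫_{−r}^0 μ(x)⁻¹ dx ) ≤ l²/β². -/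
open MeasureTheory Set

/-!
For `x > r` the decay bound from `r` to `x` gives `μ x ≤ k μ(r) e^{-α(x-r)}`, and for `0 < x ≤ r`
the decay bound from `x` to `r` gives `(μ x)⁻¹ ≤ (k / μ r) e^{-α(r-x)}`. Integrating these
exponentials, the two factors of `B₁` are at most `k μ(r) / α` and `k / (α μ(r))`, and `μ r`
cancels in the product. The bound on `B₂` is the same statement for `x ↦ μ (-x)`.
-/

open Real

lemma setIntegral_comp_neg {E : Type*} [NormedAddCommGroup E] [NormedSpace ℝ E]
    (f : ℝ → E) (s : Set ℝ) : ∫ x in s, f (-x) = ∫ x in -s, f x := by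
  simpa using (Measure.measurePreserving_neg volume).setIntegral_preimage_emb
    (MeasurableEquiv.neg ℝ).measurableEmbedding f (-s)

lemma setIntegral_Ioi_le_of_le_mul_exp {f : ℝ → ℝ} {C a r : ℝ} (ha : 0 < a)
    (hf_nonneg : ∀ x ∈ Ioi r, 0 ≤ f x) (hf_le : ∀ x ∈ Ioi r, f x ≤ C * exp (a * (r - x))) :
    ∫ x in Ioi r, f x ≤ C / a := by
  have hg : (fun x => C * exp (a * (r - x))) = fun x => C * exp (a * r) * exp (-a * x) := by
    ext x; rw [mul_assoc, ← exp_add]; ring_nf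
  have hg_int : IntegrableOn (fun x => C * exp (a * (r - x))) (Ioi r) := by
    rw [hg]; exact (integrableOn_exp_mul_Ioi (neg_lt_zero.2 ha) r).const_mul _
  calc ∫ x in Ioi r, f x ≤ ∫ x in Ioi r, C * exp (a * (r - x)) :=
        integral_mono_of_nonneg (ae_restrict_of_forall_mem measurableSet_Ioi hf_nonneg) hg_int
          (ae_restrict_of_forall_mem measurableSet_Ioi hf_le)
    _ = C / a := by
        rw [hg, integral_const_mul, integral_exp_mul_Ioi (neg_lt_zero.2 ha)]
        field_simp
        rw [mul_assoc, ← exp_add]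
        simp

lemma setIntegral_Ioc_le_of_le_mul_exp {f : ℝ → ℝ} {C a q r : ℝ} (hC : 0 ≤ C) (ha : 0 < a)
    (hf_nonneg : ∀ x ∈ Ioc q r, 0 ≤ f x) (hf_le : ∀ x ∈ Ioc q r, f x ≤ C * exp (a * (x - r))) :
    ∫ x in Ioc q r, f x ≤ C / a := by
  have hg : (fun x => C * exp (a * (x - r))) = fun x => C * exp (-a * r) * exp (a * x) := by
    ext x; rw [mul_assoc, ← exp_add]; ring_nf
  have hg_int : IntegrableOn (fun x => C * exp (a * (x - r))) (Iic r) := by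
    rw [hg]; exact (integrableOn_exp_mul_Iic ha r).const_mul _
  calc ∫ x in Ioc q r, f x ≤ ∫ x in Ioc q r, C * exp (a * (x - r)) :=
        integral_mono_of_nonneg (ae_restrict_of_forall_mem measurableSet_Ioc hf_nonneg)
          (hg_int.mono_set Ioc_subset_Iic_self) (ae_restrict_of_forall_mem measurableSet_Ioc hf_le)
    _ ≤ ∫ x in Iic r, C * exp (a * (x - r)) :=
        setIntegral_mono_set hg_int (ae_of_all _ fun x => by positivity)
          Ioc_subset_Iic_self.eventuallyLE
    _ = C / a := by
        rw [hg, integral_const_mul, integral_exp_mul_Iic ha]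
        field_simp
        rw [mul_assoc, ← exp_add]
        simp

def HasExpDecay (f : ℝ → ℝ) (k a : ℝ) : Prop :=
  ∀ x ≥ (0 : ℝ), ∀ y ≥ (0 : ℝ), f (x + y) ≤ k * exp (-a * y) * f x

namespace HasExpDecay

variable {f : ℝ → ℝ} {k a : ℝ}

lemma one_le (hf : HasExpDecay f k a) (hf_pos : ∀ x, 0 < f x) : 1 ≤ k := by
  have h := hf 0 le_rfl 0 le_rfl
  simp only [add_zero, mul_zero, exp_zero, mul_one] at h
  exact (le_mul_iff_one_le_left (hf_pos 0)).1 h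

lemma le_mul_exp (hf : HasExpDecay f k a) {r x : ℝ} (hr : 0 ≤ r) (hx : r < x) :
    f x ≤ k * f r * exp (a * (r - x)) := by
  have h := hf r hr (x - r) (by linarith)
  rw [add_sub_cancel] at h
  calc f x ≤ k * exp (-a * (x - r)) * f r := h
    _ = k * f r * exp (a * (r - x)) := by ring_nf

lemma inv_le_mul_exp (hf : HasExpDecay f k a) (hf_pos : ∀ x, 0 < f x) {r x : ℝ} (hx : 0 ≤ x)
    (hxr : x ≤ r) : (f x)⁻¹ ≤ k / f r * exp (a * (x - r)) := by
  have h := hf x hx (r - x) (by linarith)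
  rw [add_sub_cancel] at h
  rw [inv_le_iff_one_le_mul₀ (hf_pos x), div_mul_eq_mul_div, div_mul_eq_mul_div,
    le_div_iff₀ (hf_pos r)]
  calc 1 * f r ≤ k * exp (-a * (r - x)) * f x := by rwa [one_mul]
    _ = k * exp (a * (x - r)) * f x := by ring_nf

theorem muckenhoupt_le (hf : HasExpDecay f k a) (hf_pos : ∀ x, 0 < f x) (ha : 0 < a) {r : ℝ}
    (hr : 0 < r) :
    (∫ x in Ioi r, f x) * (∫ x in Ioc (0 : ℝ) r, (f x)⁻¹) ≤ k ^ 2 / a ^ 2 := by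
  have hk : 0 ≤ k := zero_le_one.trans (hf.one_le hf_pos)
  have hfr := hf_pos r
  have h_tail : ∫ x in Ioi r, f x ≤ k * f r / a :=
    setIntegral_Ioi_le_of_le_mul_exp ha (fun x _ => (hf_pos x).le)
      fun x hx => hf.le_mul_exp hr.le hx
  have h_head : ∫ x in Ioc (0 : ℝ) r, (f x)⁻¹ ≤ k / f r / a :=
    setIntegral_Ioc_le_of_le_mul_exp (by positivity) ha (fun x _ => (inv_pos.2 (hf_pos x)).le)
      fun x hx => hf.inv_le_mul_exp hf_pos hx.1.le hx.2
  calc (∫ x in Ioi r, f x) * (∫ x in Ioc (0 : ℝ) r, (f x)⁻¹)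
      ≤ k * f r / a * (k / f r / a) :=
        mul_le_mul h_tail h_head
          (setIntegral_nonneg measurableSet_Ioc fun x _ => (inv_pos.2 (hf_pos x)).le)
          (by positivity)
    _ = k ^ 2 / a ^ 2 := by field_simp

end HasExpDecay

theorem stmt_7_general
    (μ : ℝ → ℝ) (hμ_pos : ∀ x, 0 < μ x)
    (α β k l : ℝ) (hα : 0 < α) (hβ : 0 < β)
    (hdecay1 : ∀ x ≥ (0 : ℝ), ∀ y ≥ (0 : ℝ), μ (x + y) ≤ k * Real.exp (-α * y) * μ x)
    (hdecay2 : ∀ x ≥ (0 : ℝ), ∀ y ≥ (0 : ℝ), μ (-x - y) ≤ l * Real.exp (-β * y) * μ (-x)) :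
    (∀ r > (0 : ℝ),
      (∫ x in Ioi r, μ x) * (∫ x in Ioc (0 : ℝ) r, (μ x)⁻¹) ≤ k ^ 2 / α ^ 2) ∧
    (∀ r > (0 : ℝ),
      (∫ x in Iio (-r), μ x) * (∫ x in Ico (-r) (0 : ℝ), (μ x)⁻¹) ≤ l ^ 2 / β ^ 2) := by
  refine ⟨fun r hr => HasExpDecay.muckenhoupt_le hdecay1 hμ_pos hα hr, fun r hr => ?_⟩
  have hdecay_neg : HasExpDecay (fun x => μ (-x)) l β := fun x hx y hy => by
    simpa only [neg_add'] using hdecay2 x hx y hy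
  have h := hdecay_neg.muckenhoupt_le (fun x => hμ_pos _) hβ hr
  rwa [setIntegral_comp_neg, setIntegral_comp_neg (fun x => (μ x)⁻¹), neg_Ioi, neg_Ioc,
    neg_zero] at h

/-- Step (II) of the proof of Theorem 3.4: exponential decay of the weight `μ` implies that
the Muckenhoupt constants are bounded, `B₁ ≤ k²/α²` and `B₂ ≤ l²/β²`. -/
theorem stmt_7
    (μ : ℝ → ℝ) (hμ_meas : Measurable μ) (hμ_pos : ∀ x, 0 < μ x)
    (hμ_loc : LocallyIntegrable μ volume)
    (α β k l : ℝ) (hα : 0 < α) (hβ : 0 < β) (hk : 0 < k) (hl : 0 < l)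
    (hdecay1 : ∀ x ≥ (0 : ℝ), ∀ y ≥ (0 : ℝ), μ (x + y) ≤ k * Real.exp (-α * y) * μ x)
    (hdecay2 : ∀ x ≥ (0 : ℝ), ∀ y ≥ (0 : ℝ), μ (-x - y) ≤ l * Real.exp (-β * y) * μ (-x)) :
    (∀ r > (0 : ℝ),
      (∫ x in Ioi r, μ x) * (∫ x in Ioc (0 : ℝ) r, (μ x)⁻¹) ≤ k ^ 2 / α ^ 2) ∧
    (∀ r > (0 : ℝ),
      (∫ x in Iio (-r), μ x) * (∫ x in Ico (-r) (0 : ℝ), (μ x)⁻¹) ≤ l ^ 2 / β ^ 2) :=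
  stmt_7_general μ hμ_pos α β k l hα hβ hdecay1 hdecay2
end

section
/- Let F : ℝ → ℝ be C¹ with F′ ≥ 0, let w be a probability density with |w_x| ≤ M w almost everywhere, and let û : ℝ → ℝ be C² and strictly increasing with û′ > 0, satisfying |û″(x)| ≤ M û′(x) for all x, and let |c| M < 1. Set û⁰′ := û′ − c û″ (the derivative of û⁰ = û − cû′ = w∗F(û)). Assume 0 < ∫ û⁰′(x) û′(x) F′(û(x)) dx < ∞. Then ∫ û″(x)² F′(û(x)) dx ≤ ( M² / (1 − |c| M) ) ∫ û⁰′(x) û′(x) F′(û(x)) dx. -/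
/-!
Pointwise, `c û″ ≤ |c| M û′` gives `û⁰′ ≥ (1 − |c|M) û′`, hence
`û″² ≤ M² û′² ≤ M²/(1 − |c|M) · û⁰′ û′`; integrating against the weight `F′(û) ≥ 0` gives the
estimate.
-/

open MeasureTheory

theorem sq_le_div_mul_of_abs_le {a b c M : ℝ} (ha : 0 ≤ a) (hb : |b| ≤ M * a)
    (hcM : |c| * M < 1) :
    b ^ 2 ≤ M ^ 2 / (1 - |c| * M) * ((a - c * b) * a) := by
  have hden : 0 < 1 - |c| * M := by linarith
  have hcb : c * b ≤ |c| * M * a :=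
    calc c * b ≤ |c| * |b| := (le_abs_self _).trans (abs_mul c b).le
      _ ≤ |c| * (M * a) := mul_le_mul_of_nonneg_left hb (abs_nonneg c)
      _ = |c| * M * a := by ring
  have hlower : (1 - |c| * M) * a ^ 2 ≤ (a - c * b) * a := by nlinarith
  have hb_sq : b ^ 2 ≤ M ^ 2 * a ^ 2 := by
    rw [← sq_abs b, ← mul_pow]
    exact pow_le_pow_left₀ (abs_nonneg b) hb 2
  rw [div_mul_eq_mul_div, le_div_iff₀ hden]
  nlinarith [sq_nonneg M]

theorem integral_sq_mul_le {α : Type*} [MeasurableSpace α] {μ : Measure α}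
    {a b m : α → ℝ} {c M : ℝ} (ha : ∀ x, 0 ≤ a x) (hb : ∀ x, |b x| ≤ M * a x)
    (hm : ∀ x, 0 ≤ m x) (hcM : |c| * M < 1)
    (hint : Integrable (fun x => (a x - c * b x) * a x * m x) μ) :
    ∫ x, b x ^ 2 * m x ∂μ ≤ M ^ 2 / (1 - |c| * M) * ∫ x, (a x - c * b x) * a x * m x ∂μ := by
  rw [← integral_const_mul]
  refine integral_mono_of_nonneg (.of_forall fun x => mul_nonneg (sq_nonneg _) (hm x))
    (hint.const_mul _) (.of_forall fun x => ?_)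
  simp only [← mul_assoc _ _ (m x)]
  exact mul_le_mul_of_nonneg_right (sq_le_div_mul_of_abs_le (ha x) (hb x) hcM) (hm x)

theorem stmt_10_general
    (F : ℝ → ℝ) (hF' : ∀ x, 0 ≤ deriv F x)
    (M c : ℝ) (hcM : |c| * M < 1)
    (u : ℝ → ℝ)
    (hu' : ∀ x, 0 < deriv u x)
    (hbend : ∀ x, |deriv (deriv u) x| ≤ M * deriv u x)
    (hint : Integrable
      (fun x => (deriv u x - c * deriv (deriv u) x) * deriv u x * deriv F (u x))) :
    (∫ x, (deriv (deriv u) x) ^ 2 * deriv F (u x)) ≤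
      M ^ 2 / (1 - |c| * M) *
        ∫ x, (deriv u x - c * deriv (deriv u) x) * deriv u x * deriv F (u x) :=
  integral_sq_mul_le (fun x => (hu' x).le) hbend (fun x => hF' (u x)) hcM hint

/-- The estimate `‖û_xx‖²_𝔪 / Z⁰ ≤ M²/(1−|c|M)` in the neural field example:
with `𝔪 = F′(û)` and `û⁰′ = û′ − cû″`,
`∫ û″² F′(û) dx ≤ (M²/(1−|c|M)) ∫ û⁰′ û′ F′(û) dx`. -/
theorem stmt_10
    (F : ℝ → ℝ) (hF : ContDiff ℝ 1 F) (hF' : ∀ x, 0 ≤ deriv F x)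
    (M c : ℝ) (hcM : |c| * M < 1)
    (w : ℝ → ℝ) (hw_meas : Measurable w) (hw_nonneg : ∀ x, 0 ≤ w x)
    (hw_int : Integrable w) (hw_prob : (∫ x, w x) = 1)
    (w' : ℝ → ℝ) (hw_diff : ∀ᵐ x ∂(volume : Measure ℝ), HasDerivAt w (w' x) x)
    (hw_bdd : ∀ᵐ x ∂(volume : Measure ℝ), |w' x| ≤ M * w x)
    (u : ℝ → ℝ) (hu : ContDiff ℝ 2 u) (hu_mono : StrictMono u)
    (hu' : ∀ x, 0 < deriv u x)
    (hbend : ∀ x, |deriv (deriv u) x| ≤ M * deriv u x)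
    (hint : Integrable
      (fun x => (deriv u x - c * deriv (deriv u) x) * deriv u x * deriv F (u x)))
    (hpos : 0 < ∫ x, (deriv u x - c * deriv (deriv u) x) * deriv u x * deriv F (u x)) :
    (∫ x, (deriv (deriv u) x) ^ 2 * deriv F (u x)) ≤
      M ^ 2 / (1 - |c| * M) *
        ∫ x, (deriv u x - c * deriv (deriv u) x) * deriv u x * deriv F (u x) :=
  stmt_10_general F hF' M c hcM u hu' hbend hint
end

section
/- In the neural field traveling wave setting with c > 0, assume F is C² and convex–concave (there exists z such that F″(x) ≥ 0 for x ≤ z and F″(x) ≤ 0 for x ≥ z) and that the Ermentrout–McLeod formula holds: c = ( ∫_{a₁}^{a₂} (t − F(t)) dt ) / ( ∫ û′(x)² F′(û(x)) dx ). Then c ≤ (σ/4) · ( ∫_{a₁}^{a₂} (t − F(t)) dt ) / ( ∫_a^{a₂} (F(t) − t) dt ). -/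
/-!
With `G t = ∫ s in t..a₂, (F s - s)`, monotonicity of `F ∘ u` turns the profile equation into
`σ² u'' ≤ u - F u`, and the energy `σ² u'² / 2 - G u` is then nonincreasing with limit `0`, so
`√(2 G(u)) ≤ σ u'`. Let `t₀ ∈ (a₁, a)` be the last zero of `G`, and `u x₀ = t₀`. Past `x₀`, by
AM–GM, the derivative of `√(2 G(u)) (F(u) - u) + 2 ∫ s in t₀..u, |F s - s|` is at most
`√(2 G(u)) F'(u) u' ≤ σ u'² F'(u)`. That function vanishes at `x₀` and tends to
`4 ∫ t in a..a₂, (F t - t)` at `+∞`, so this integral is at most `σ ∫ u'² F'(u)`, which by the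
Ermentrout–McLeod formula is `σ/c · ∫ t in a₁..a₂, (t - F t)`.
-/

open MeasureTheory Filter Set Topology

lemma le_setIntegral_exp_neg_mul_comp_add {f : ℝ → ℝ} (hf : Monotone f) {C : ℝ}
    (hC : ∀ y, |f y| ≤ C) {c : ℝ} (hc : 0 ≤ c) (x : ℝ) :
    f x ≤ ∫ s in Ioi 0, Real.exp (-s) * f (x + c * s) := by
  have hexp : IntegrableOn (fun s => Real.exp (-s)) (Ioi 0) := by
    simpa using exp_neg_integrableOn_Ioi 0 one_pos
  have hint : IntegrableOn (fun s => Real.exp (-s) * f (x + c * s)) (Ioi 0) :=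
    hexp.mul_bdd (hf.measurable.comp (by fun_prop)).aestronglyMeasurable
      (ae_of_all _ fun s => hC _)
  calc f x = ∫ s in Ioi 0, Real.exp (-s) * f x := by
        rw [integral_mul_const, integral_exp_neg_Ioi_zero, one_mul]
    _ ≤ _ := setIntegral_mono_on (hexp.mul_const _) hint measurableSet_Ioi fun s hs =>
        mul_le_mul_of_nonneg_left (hf (le_add_of_nonneg_right (mul_nonneg hc (le_of_lt hs))))
          (Real.exp_pos _).le

lemma sub_le_mul_deriv_sq_div_two {u Φ φ : ℝ → ℝ} {k b : ℝ}
    (hΦ : ∀ t, HasDerivAt Φ (φ t) t) (hu : Differentiable ℝ u)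
    (hu' : Differentiable ℝ (deriv u)) (hu_mono : Monotone u)
    (hode : ∀ x, k * deriv (deriv u) x ≤ φ (u x))
    (hlim : Tendsto u atTop (𝓝 b)) (hlim' : Tendsto (deriv u) atTop (𝓝 0)) (x : ℝ) :
    Φ (u x) - Φ b ≤ k * deriv u x ^ 2 / 2 := by
  set W := fun x => k * deriv u x ^ 2 / 2 - Φ (u x)
  have hW : ∀ x, HasDerivAt W (deriv u x * (k * deriv (deriv u) x - φ (u x))) x := fun x =>
    ((((hu' x).hasDerivAt.pow 2).const_mul k).div_const 2).sub
      ((hΦ (u x)).comp x (hu x).hasDerivAt) |>.congr_deriv (by ring)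
  have hW_anti : Antitone W :=
    antitone_of_deriv_nonpos (fun x => (hW x).differentiableAt) fun x => by
      rw [(hW x).deriv]
      exact mul_nonpos_of_nonneg_of_nonpos hu_mono.deriv_nonneg (by linarith [hode x])
  have hW_lim : Tendsto W atTop (𝓝 (k * 0 ^ 2 / 2 - Φ b)) :=
    (((hlim'.pow 2).const_mul k).div_const 2).sub ((hΦ b).continuousAt.tendsto.comp hlim)
  have := hW_anti.le_of_tendsto hW_lim x
  simp only [W] at this
  linarith

lemma Continuous.le_on_Icc_of_lt_on_Ioo {f g : ℝ → ℝ} (hf : Continuous f) (hg : Continuous g)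
    {a b : ℝ} (hab : a < b) (h : ∀ t ∈ Ioo a b, f t < g t) : ∀ t ∈ Icc a b, f t ≤ g t := by
  rw [← closure_Ioo hab.ne]
  exact fun t ht => closure_lt_subset_le hf hg (closure_mono h ht)

noncomputable def potential (F : ℝ → ℝ) (b t : ℝ) : ℝ := ∫ s in t..b, (F s - s)

section potential

variable {F : ℝ → ℝ} {b : ℝ}

lemma hasDerivAt_potential (hF : Continuous F) (t : ℝ) :
    HasDerivAt (potential F b) (t - F t) t := by
  have hf : Continuous fun s => F s - s := hF.sub continuous_id
  exact (intervalIntegral.integral_hasDerivAt_left (hf.intervalIntegrable _ _)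
    (hf.stronglyMeasurableAtFilter _ _) hf.continuousAt).congr_deriv (neg_sub _ _)

lemma continuous_potential (hF : Continuous F) : Continuous (potential F b) :=
  continuous_iff_continuousAt.2 fun t => (hasDerivAt_potential hF t).continuousAt

@[simp] lemma potential_self : potential F b b = 0 := intervalIntegral.integral_same

lemma potential_pos {t : ℝ} (hF : Continuous F) (htb : t < b) (h : ∀ s ∈ Ioo t b, s < F s) :
    0 < potential F b t :=
  intervalIntegral.intervalIntegral_pos_of_pos_on ((hF.sub continuous_id).intervalIntegrable _ _)
    (fun s hs => sub_pos.2 (h s hs)) htb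

lemma exists_potential_eq_zero {a₁ a : ℝ} (hF : Continuous F) (ha₁ : a₁ < a) (ha : a < b)
    (hbelow : ∀ t ∈ Ioo a₁ a, F t < t) (habove : ∀ t ∈ Ioo a b, t < F t)
    (hneg : potential F b a₁ < 0) :
    ∃ t₀ ∈ Ioo a₁ a, potential F b t₀ = 0 ∧ ∀ t ∈ Ioo t₀ b, 0 < potential F b t := by
  have hpos : ∀ t ∈ Ico a b, 0 < potential F b t := fun t ht =>
    potential_pos hF ht.2 fun s hs => habove s ⟨ht.1.trans_lt hs.1, hs.2⟩
  have hmono : StrictMonoOn (potential F b) (Icc a₁ a) :=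
    strictMonoOn_of_deriv_pos (convex_Icc _ _) (continuous_potential hF).continuousOn
      fun t ht => by
        rw [interior_Icc] at ht
        rw [(hasDerivAt_potential hF t).deriv]
        exact sub_pos.2 (hbelow t ht)
  obtain ⟨t₀, ht₀, hzero⟩ := intermediate_value_Icc ha₁.le
    (continuous_potential hF).continuousOn ⟨hneg.le, (hpos a ⟨le_rfl, ha⟩).le⟩
  refine ⟨t₀, ⟨ht₀.1.lt_of_ne ?_, ht₀.2.lt_of_ne ?_⟩, hzero, fun t ht => ?_⟩
  · rintro rfl
    exact hneg.ne hzero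
  · rintro rfl
    exact (hpos t₀ ⟨le_rfl, ha⟩).ne' hzero
  · rcases le_or_gt a t with hat | hta
    · exact hpos t ⟨hat, ht.2⟩
    · exact hzero ▸ hmono ht₀ ⟨ht₀.1.trans ht.1.le, hta.le⟩ ht.1

lemma integral_abs_sub_eq_two_mul_potential {t₀ a : ℝ} (hF : Continuous F) (ht₀ : t₀ ≤ a)
    (ha : a ≤ b) (hle : ∀ s ∈ Icc t₀ a, F s ≤ s) (hge : ∀ s ∈ Icc a b, s ≤ F s)
    (hzero : potential F b t₀ = 0) :
    ∫ s in t₀..b, |F s - s| = 2 * potential F b a := by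
  have hf : Continuous fun s => F s - s := hF.sub continuous_id
  have h₁ : ∫ s in t₀..a, |F s - s| = -∫ s in t₀..a, (F s - s) := by
    rw [← intervalIntegral.integral_neg]
    refine intervalIntegral.integral_congr fun s hs => ?_
    rw [uIcc_of_le ht₀] at hs
    exact abs_of_nonpos (sub_nonpos.2 (hle s hs))
  have h₂ : ∫ s in a..b, |F s - s| = potential F b a := by
    refine intervalIntegral.integral_congr fun s hs => ?_
    rw [uIcc_of_le ha] at hs
    exact abs_of_nonneg (sub_nonneg.2 (hge s hs))
  have hsplit : (∫ s in t₀..a, (F s - s)) + potential F b a = potential F b t₀ := by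
    unfold potential
    exact intervalIntegral.integral_add_adjacent_intervals (hf.intervalIntegrable _ _)
      (hf.intervalIntegrable _ _)
  rw [← intervalIntegral.integral_add_adjacent_intervals (hf.abs.intervalIntegrable _ _)
    (hf.abs.intervalIntegrable _ _), h₁, h₂]
  linarith

end potential

noncomputable def comparison (F : ℝ → ℝ) (t₀ b t : ℝ) : ℝ :=
  √(2 * potential F b t) * (F t - t) + 2 * ∫ s in t₀..t, |F s - s|

section comparison

variable {F : ℝ → ℝ} {t₀ b : ℝ}

lemma continuous_comparison (hF : Continuous F) : Continuous (comparison F t₀ b) :=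
  ((continuous_const.mul (continuous_potential hF)).sqrt.mul (hF.sub continuous_id)).add
    (continuous_const.mul (intervalIntegral.continuous_primitive
      (fun _ _ => (hF.sub continuous_id).abs.intervalIntegrable _ _) t₀))

lemma comparison_of_potential_eq_zero (h : potential F b t₀ = 0) : comparison F t₀ b t₀ = 0 := by
  simp [comparison, h]

lemma comparison_self_right : comparison F t₀ b b = 2 * ∫ s in t₀..b, |F s - s| := by
  simp [comparison]

lemma two_mul_abs_le_sq_div_add {h q : ℝ} (hq : 0 < q) : 2 * |h| ≤ h ^ 2 / q + q := by
  rw [div_add' _ _ _ hq.ne', le_div_iff₀ hq]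
  nlinarith [sq_nonneg (|h| - q), sq_abs h]

lemma exists_hasDerivAt_comparison_le (hF : Differentiable ℝ F) {t : ℝ}
    (ht : 0 < potential F b t) :
    ∃ H', HasDerivAt (comparison F t₀ b) H' t ∧ H' ≤ √(2 * potential F b t) * deriv F t := by
  have hFc := hF.continuous
  have hG : HasDerivAt (fun t => 2 * potential F b t) (2 * (t - F t)) t :=
    (hasDerivAt_potential hFc t).const_mul 2
  have hA : HasDerivAt (fun t => ∫ s in t₀..t, |F s - s|) |F t - t| t :=
    (hFc.sub continuous_id).abs.integral_hasStrictDerivAt t₀ t |>.hasDerivAt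
  refine ⟨_, ((hG.sqrt (by positivity)).mul ((hF t).hasDerivAt.sub (hasDerivAt_id' t))).add
    (hA.const_mul 2), ?_⟩
  set q := √(2 * potential F b t)
  have hq : 0 < q := Real.sqrt_pos.2 (by positivity)
  have hsq : 2 * (t - F t) / (2 * q) * (F t - t) = -((F t - t) ^ 2 / q) := by
    field_simp
    ring
  simp only [Pi.sub_apply]
  linarith [two_mul_abs_le_sq_div_add (h := F t - t) hq]

end comparison

lemma comparison_comp_sub_le {F u : ℝ → ℝ} {σ t₀ b x₀ R : ℝ} (hF : Differentiable ℝ F)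
    (hF_mono : Monotone F) (hu : Differentiable ℝ u) (hu_mono : Monotone u) (hσ : 0 ≤ σ)
    (hpos : ∀ x > x₀, 0 < potential F b (u x))
    (hsqrt : ∀ x, √(2 * potential F b (u x)) ≤ σ * deriv u x)
    (hint : Integrable fun x => deriv u x ^ 2 * deriv F (u x)) (hR : x₀ ≤ R) :
    comparison F t₀ b (u R) - comparison F t₀ b (u x₀) ≤
      σ * ∫ x, deriv u x ^ 2 * deriv F (u x) := by
  choose! H' hH' hH'_le using fun t (ht : 0 < potential F b t) =>
    exists_hasDerivAt_comparison_le (t₀ := t₀) hF ht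
  have hderiv_le : ∀ x ∈ Ioo x₀ R,
      H' (u x) * deriv u x ≤ σ * (deriv u x ^ 2 * deriv F (u x)) := fun x hx =>
    calc H' (u x) * deriv u x
        ≤ √(2 * potential F b (u x)) * deriv F (u x) * deriv u x :=
          mul_le_mul_of_nonneg_right (hH'_le _ (hpos x hx.1)) hu_mono.deriv_nonneg
      _ ≤ σ * deriv u x * deriv F (u x) * deriv u x := by
          gcongr
          exacts [hu_mono.deriv_nonneg, hF_mono.deriv_nonneg, hsqrt x]
      _ = σ * (deriv u x ^ 2 * deriv F (u x)) := by ring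
  calc comparison F t₀ b (u R) - comparison F t₀ b (u x₀)
      ≤ ∫ x in x₀..R, σ * (deriv u x ^ 2 * deriv F (u x)) :=
        intervalIntegral.sub_le_integral_of_hasDeriv_right_of_le hR
          ((continuous_comparison hF.continuous).comp hu.continuous).continuousOn
          (fun x hx => ((hH' _ (hpos x hx.1)).comp x (hu x).hasDerivAt).hasDerivWithinAt)
          (hint.const_mul σ).integrableOn hderiv_le
    _ = σ * ∫ x in Ioc x₀ R, deriv u x ^ 2 * deriv F (u x) := by
        rw [intervalIntegral.integral_const_mul, intervalIntegral.integral_of_le hR]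
    _ ≤ σ * ∫ x, deriv u x ^ 2 * deriv F (u x) :=
        mul_le_mul_of_nonneg_left (setIntegral_le_integral hint (ae_of_all _ fun _ =>
          mul_nonneg (sq_nonneg _) hF_mono.deriv_nonneg)) hσ

lemma sqrt_two_mul_potential_comp_le {F u : ℝ → ℝ} {σ b : ℝ} (hσ : 0 ≤ σ) (hF : Continuous F)
    (hu : ContDiff ℝ 2 u) (hu_mono : Monotone u)
    (hode : ∀ x, σ ^ 2 * deriv (deriv u) x ≤ u x - F (u x))
    (hlim : Tendsto u atTop (𝓝 b)) (hlim' : Tendsto (deriv u) atTop (𝓝 0)) (x : ℝ) :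
    √(2 * potential F b (u x)) ≤ σ * deriv u x := by
  have hu' : Differentiable ℝ (deriv u) := by
    simpa using hu.differentiable_iteratedDeriv 1 (by norm_num)
  have := sub_le_mul_deriv_sq_div_two (hasDerivAt_potential (b := b) hF)
    (hu.differentiable two_ne_zero) hu' hu_mono hode hlim hlim' x
  rw [potential_self, sub_zero] at this
  rw [Real.sqrt_le_iff]
  exact ⟨mul_nonneg hσ hu_mono.deriv_nonneg, by linarith⟩

lemma four_mul_potential_le_mul_integral {F u : ℝ → ℝ} {σ a₁ a a₂ : ℝ} (hσ : 0 ≤ σ)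
    (ha₁ : a₁ < a) (ha₂ : a < a₂) (hF : Differentiable ℝ F) (hF_mono : Monotone F)
    (hbelow : ∀ t ∈ Ioo a₁ a, F t < t) (habove : ∀ t ∈ Ioo a a₂, t < F t)
    (hneg : potential F a₂ a₁ < 0) (hu : Differentiable ℝ u) (hu_mono : StrictMono u)
    (hlim₁ : Tendsto u atBot (𝓝 a₁)) (hlim₂ : Tendsto u atTop (𝓝 a₂))
    (hsqrt : ∀ x, √(2 * potential F a₂ (u x)) ≤ σ * deriv u x)
    (hint : Integrable fun x => deriv u x ^ 2 * deriv F (u x)) :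
    4 * potential F a₂ a ≤ σ * ∫ x, deriv u x ^ 2 * deriv F (u x) := by
  have hFc := hF.continuous
  obtain ⟨t₀, ht₀, hzero, hpos⟩ := exists_potential_eq_zero hFc ha₁ ha₂ hbelow habove hneg
  obtain ⟨x₀, rfl⟩ : t₀ ∈ range u := mem_range_of_exists_le_of_exists_ge hu.continuous
    ((hlim₁.eventually_lt_const ht₀.1).exists.imp fun _ => le_of_lt)
    ((hlim₂.eventually_const_lt (ht₀.2.trans ha₂)).exists.imp fun _ => le_of_lt)
  have hlim : Tendsto (comparison F (u x₀) a₂ ∘ u) atTop (𝓝 (comparison F (u x₀) a₂ a₂)) :=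
    ((continuous_comparison hFc).tendsto a₂).comp hlim₂
  have hle (s : ℝ) (hs : s ∈ Icc (u x₀) a) : F s ≤ s :=
    hFc.le_on_Icc_of_lt_on_Ioo continuous_id ha₁ hbelow s ⟨ht₀.1.le.trans hs.1, hs.2⟩
  rw [comparison_self_right, integral_abs_sub_eq_two_mul_potential hFc ht₀.2.le ha₂.le hle
    (continuous_id.le_on_Icc_of_lt_on_Ioo hFc ha₂ habove) hzero, ← mul_assoc,
    show (2 : ℝ) * 2 = 4 by norm_num] at hlim
  have hu_lt (x : ℝ) : u x < a₂ :=
    (hu_mono (lt_add_one x)).trans_le (hu_mono.monotone.ge_of_tendsto hlim₂ _)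
  refine le_of_tendsto hlim (eventually_atTop.2 ⟨x₀, fun R hR => ?_⟩)
  have := comparison_comp_sub_le (t₀ := u x₀) hF hF_mono hu hu_mono.monotone hσ
    (fun x hx => hpos _ ⟨hu_mono hx, hu_lt x⟩) hsqrt hint hR
  rw [comparison_of_potential_eq_zero hzero, sub_zero] at this
  exact this

theorem stmt_11_general
    (σ c : ℝ) (hσ : 0 < σ) (hc : 0 < c)
    (a₁ a a₂ : ℝ) (ha₁ : a₁ < a) (ha₂ : a < a₂)
    (F : ℝ → ℝ) (hF : ContDiff ℝ 2 F) (hF_mono : Monotone F)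
    (hbelow : ∀ t ∈ Ioo a₁ a, F t < t) (habove : ∀ t ∈ Ioo a a₂, t < F t)
    (u : ℝ → ℝ) (hu : ContDiff ℝ 2 u) (hu_mono : StrictMono u)
    (hlim₁ : Tendsto u atBot (nhds a₁)) (hlim₂ : Tendsto u atTop (nhds a₂))
    (hlim₄ : Tendsto (deriv u) atTop (nhds 0))
    (hprofile2 : ∀ x, σ ^ 2 * deriv (deriv u) x =
      u x - ∫ s in Ioi (0 : ℝ), Real.exp (-s) * F (u (x + c * s)))
    (hint : Integrable (fun x => (deriv u x) ^ 2 * deriv F (u x)))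
    (hpos : 0 < ∫ x, (deriv u x) ^ 2 * deriv F (u x))
    (hEM : c = (∫ t in a₁..a₂, (t - F t)) / ∫ x, (deriv u x) ^ 2 * deriv F (u x)) :
    c ≤ σ / 4 * ((∫ t in a₁..a₂, (t - F t)) / ∫ t in a..a₂, (F t - t)) := by
  set D := ∫ x, (deriv u x) ^ 2 * deriv F (u x)
  set N := ∫ t in a₁..a₂, (t - F t)
  change c ≤ σ / 4 * (N / potential F a₂ a)
  have hFc : Continuous F := hF.continuous
  have hN : 0 < N := by
    rw [← div_mul_cancel₀ N hpos.ne', ← hEM]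
    positivity
  have hM : 0 < potential F a₂ a := potential_pos hFc ha₂ habove
  suffices h : 4 * potential F a₂ a ≤ σ * D by
    rw [hEM, div_le_iff₀ hpos]
    field_simp
    nlinarith [mul_le_mul_of_nonneg_left h hN.le]
  have hF_comp_bound (y : ℝ) : |F (u y)| ≤ max |F a₁| |F a₂| :=
    abs_le_max_abs_abs (hF_mono (hu_mono.monotone.le_of_tendsto hlim₁ y))
      (hF_mono (hu_mono.monotone.ge_of_tendsto hlim₂ y))
  have hode (x : ℝ) : σ ^ 2 * deriv (deriv u) x ≤ u x - F (u x) := by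
    rw [hprofile2]
    exact sub_le_sub_left (le_setIntegral_exp_neg_mul_comp_add
      (hF_mono.comp hu_mono.monotone) hF_comp_bound hc.le x) _
  have hpotential_a₁ : potential F a₂ a₁ = -N := by
    simp only [potential, N, ← intervalIntegral.integral_neg, neg_sub]
  exact four_mul_potential_le_mul_integral hσ.le ha₁ ha₂ (hF.differentiable two_ne_zero)
    hF_mono hbelow habove (hpotential_a₁ ▸ neg_neg_of_pos hN) (hu.differentiable two_ne_zero)
    hu_mono hlim₁ hlim₂
    (sqrt_two_mul_potential_comp_le hσ.le hFc hu hu_mono.monotone hode hlim₂ hlim₄) hint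

/-- Upper bound on the wave speed (Proposition 4.2, upper bound): in the neural field
traveling wave setting with two-sided exponential kernel and convex–concave gain `F`,
the Ermentrout–McLeod formula yields
`c ≤ (σ/4) (∫_{a₁}^{a₂} (t−F(t)) dt) / (∫_a^{a₂} (F(t)−t) dt)`. -/
theorem stmt_11
    (σ c : ℝ) (hσ : 0 < σ) (hc : 0 < c)
    (a₁ a a₂ : ℝ) (ha₁ : a₁ < a) (ha₂ : a < a₂)
    (F : ℝ → ℝ) (hF : ContDiff ℝ 2 F) (hF_mono : Monotone F)
    (hfix₁ : F a₁ = a₁) (hfix : F a = a) (hfix₂ : F a₂ = a₂)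
    (hbelow : ∀ t ∈ Ioo a₁ a, F t < t) (habove : ∀ t ∈ Ioo a a₂, t < F t)
    (hcc : ∃ z : ℝ, (∀ x ≤ z, 0 ≤ deriv (deriv F) x) ∧ (∀ x, z ≤ x → deriv (deriv F) x ≤ 0))
    (u : ℝ → ℝ) (hu : ContDiff ℝ 2 u) (hu_mono : StrictMono u)
    (hlim₁ : Tendsto u atBot (nhds a₁)) (hlim₂ : Tendsto u atTop (nhds a₂))
    (hlim₃ : Tendsto (deriv u) atBot (nhds 0)) (hlim₄ : Tendsto (deriv u) atTop (nhds 0))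
    (hprofile : ∀ x, -c * deriv u x =
      -u x + ∫ y, 1 / (2 * σ) * Real.exp (-|x - y| / σ) * F (u y))
    (hprofile2 : ∀ x, σ ^ 2 * deriv (deriv u) x =
      u x - ∫ s in Ioi (0 : ℝ), Real.exp (-s) * F (u (x + c * s)))
    (hint : Integrable (fun x => (deriv u x) ^ 2 * deriv F (u x)))
    (hpos : 0 < ∫ x, (deriv u x) ^ 2 * deriv F (u x))
    (hEM : c = (∫ t in a₁..a₂, (t - F t)) / ∫ x, (deriv u x) ^ 2 * deriv F (u x)) :
    c ≤ σ / 4 * ((∫ t in a₁..a₂, (t - F t)) / ∫ t in a..a₂, (F t - t)) :=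
  stmt_11_general σ c hσ hc a₁ a a₂ ha₁ ha₂ F hF hF_mono hbelow habove u hu hu_mono hlim₁ hlim₂
    hlim₄ hprofile2 hint hpos hEM
end

section
/- In the neural field traveling wave setting with c > 0, assume F is C² and convex–concave (there exists z such that F″(x) ≥ 0 for x ≤ z and F″(x) ≤ 0 for x ≥ z) and that the Ermentrout–McLeod formula holds: c = ( ∫_{a₁}^{a₂} (t − F(t)) dt ) / ( ∫ û′(x)² F′(û(x)) dx ). Then c ≥ ( σ / ( √2 (a₂ − a₁) ) ) · ( ∫_{a₁}^{a₂} (t − F(t)) dt ) / √( ∫_{a₁}^{a} (t − F(t)) dt ). -/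
/-!
Because `F ∘ û` is nondecreasing and `c > 0`, the profile equation gives `σ² û'' ≤ û - F(û)`.
Multiplying by `û' ≥ 0` shows that the energy `σ² û'² / 2 - ∫_{a₁}^{û} (t - F t) dt` is
nonincreasing; it vanishes at `-∞`, so `σ² û'² / 2` is bounded by the potential
`∫_{a₁}^{û} (t - F t) dt`, whose maximum on `[a₁, a₂]` is `M = ∫_{a₁}^{a} (t - F t) dt`.
Hence `û' ≤ √2 √M / σ`, and `∫ û'² F'(û) ≤ (√2 √M / σ) ∫ (F ∘ û)' = (√2 √M / σ) (a₂ - a₁)`,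
which inserted into the Ermentrout–McLeod formula is the claim.
-/

open MeasureTheory Filter Set Topology

theorem le_setIntegral_exp_neg_mul_of_monotone {g : ℝ → ℝ} {B : ℝ} (hg : Monotone g)
    (hB : ∀ s, g s ≤ B) : g 0 ≤ ∫ s in Ioi 0, Real.exp (-s) * g s := by
  have hexp : IntegrableOn (fun s : ℝ => Real.exp (-s)) (Ioi 0) := by
    simpa using exp_neg_integrableOn_Ioi 0 one_pos
  have hbdd : ∀ᵐ s ∂volume.restrict (Ioi (0 : ℝ)), ‖g s‖ ≤ max |g 0| |B| :=
    (ae_restrict_iff' measurableSet_Ioi).2 <| ae_of_all _ fun s hs =>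
      abs_le_max_abs_abs (hg (le_of_lt hs)) (hB s)
  calc g 0 = ∫ s in Ioi 0, Real.exp (-s) * g 0 := by
        rw [integral_mul_const, integral_exp_neg_Ioi_zero, one_mul]
    _ ≤ ∫ s in Ioi 0, Real.exp (-s) * g s :=
        setIntegral_mono_on (hexp.mul_const _)
          (hexp.mul_bdd hg.measurable.aestronglyMeasurable hbdd)
          measurableSet_Ioi fun s hs => by gcongr; exact hg (le_of_lt hs)

theorem nonneg_on_Icc_of_nonneg_on_Ioo {h : ℝ → ℝ} {a b : ℝ} (hh : Continuous h) (hab : a < b)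
    (hpos : ∀ t ∈ Ioo a b, 0 ≤ h t) : ∀ t ∈ Icc a b, 0 ≤ h t := by
  rw [← closure_Ioo hab.ne]
  exact closure_minimal hpos (isClosed_le continuous_const hh)

theorem intervalIntegral_le_of_sign_change {h : ℝ → ℝ} {a₁ a a₂ v : ℝ} (hh : Continuous h)
    (ha₁ : a₁ < a) (ha₂ : a < a₂) (hpos : ∀ t ∈ Ioo a₁ a, 0 ≤ h t)
    (hneg : ∀ t ∈ Ioo a a₂, h t ≤ 0) (hv : v ∈ Icc a₁ a₂) :
    ∫ t in a₁..v, h t ≤ ∫ t in a₁..a, h t := by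
  rw [← intervalIntegral.integral_add_adjacent_intervals (hh.intervalIntegrable a₁ v)
    (hh.intervalIntegrable v a), le_add_iff_nonneg_right]
  rcases le_total v a with hva | hav
  · exact intervalIntegral.integral_nonneg hva fun t ht =>
      nonneg_on_Icc_of_nonneg_on_Ioo hh ha₁ hpos t ⟨hv.1.trans ht.1, ht.2⟩
  · rw [intervalIntegral.integral_symm, ← intervalIntegral.integral_neg]
    exact intervalIntegral.integral_nonneg hav fun t ht =>
      nonneg_on_Icc_of_nonneg_on_Ioo hh.neg ha₂ (fun s hs => neg_nonneg.2 (hneg s hs)) t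
        ⟨ht.1, ht.2.trans hv.2⟩

theorem antitone_energy {u f : ℝ → ℝ} {σ b : ℝ} (hu : Differentiable ℝ u)
    (hu' : Differentiable ℝ (deriv u)) (hf : Continuous f) (hmono : ∀ x, 0 ≤ deriv u x)
    (hode : ∀ x, σ ^ 2 * deriv (deriv u) x ≤ f (u x)) :
    Antitone fun x => σ ^ 2 * deriv u x ^ 2 / 2 - ∫ t in b..u x, f t := by
  refine antitone_of_hasDerivAt_nonpos
    (f' := fun x => deriv u x * (σ ^ 2 * deriv (deriv u) x - f (u x))) (fun x => ?_)
    fun x => mul_nonpos_of_nonneg_of_nonpos (hmono x) (sub_nonpos.2 (hode x))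
  have hE := (((hu' x).hasDerivAt.pow 2).const_mul (σ ^ 2) |>.div_const 2).sub
    ((hf.integral_hasStrictDerivAt b (u x)).hasDerivAt.comp x (hu x).hasDerivAt)
  exact hE.congr_deriv (by norm_num; ring)

theorem sq_deriv_le_integral_of_ode {u f : ℝ → ℝ} {σ b : ℝ} (hu : Differentiable ℝ u)
    (hu' : Differentiable ℝ (deriv u)) (hf : Continuous f) (hmono : ∀ x, 0 ≤ deriv u x)
    (hode : ∀ x, σ ^ 2 * deriv (deriv u) x ≤ f (u x))
    (hlim : Tendsto u atBot (𝓝 b)) (hlim' : Tendsto (deriv u) atBot (𝓝 0)) (x : ℝ) :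
    σ ^ 2 * deriv u x ^ 2 / 2 ≤ ∫ t in b..u x, f t := by
  have hE : Tendsto (fun x => σ ^ 2 * deriv u x ^ 2 / 2 - ∫ t in b..u x, f t) atBot (𝓝 0) := by
    simpa using (((hlim'.pow 2).const_mul (σ ^ 2)).div_const 2).sub
      ((hf.integral_hasStrictDerivAt b b).hasDerivAt.continuousAt.tendsto.comp hlim)
  exact sub_nonpos.1 ((antitone_energy hu hu' hf hmono hode).ge_of_tendsto hE x)

theorem deriv_le_of_ode {u f : ℝ → ℝ} {σ b M : ℝ} (hσ : 0 < σ) (hu : Differentiable ℝ u)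
    (hu' : Differentiable ℝ (deriv u)) (hf : Continuous f) (hmono : ∀ x, 0 ≤ deriv u x)
    (hode : ∀ x, σ ^ 2 * deriv (deriv u) x ≤ f (u x))
    (hlim : Tendsto u atBot (𝓝 b)) (hlim' : Tendsto (deriv u) atBot (𝓝 0))
    (hM : ∀ x, ∫ t in b..u x, f t ≤ M) (x : ℝ) :
    deriv u x ≤ Real.sqrt 2 * Real.sqrt M / σ := by
  have := sq_deriv_le_integral_of_ode hu hu' hf hmono hode hlim hlim' x
  rw [le_div_iff₀ hσ, ← Real.sqrt_mul zero_le_two]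
  exact Real.le_sqrt_of_sq_le (by nlinarith [hM x])

theorem integral_mul_deriv_le_of_le {φ g g' : ℝ → ℝ} {K b₁ b₂ : ℝ}
    (hg : ∀ x, HasDerivAt g (g' x) x) (hg' : Continuous g') (hg'_nonneg : ∀ x, 0 ≤ g' x)
    (hφ : ∀ x, φ x ≤ K) (hK : 0 ≤ K) (hb : ∀ x, g x ∈ Icc b₁ b₂) :
    ∫ x, φ x * g' x ≤ K * (b₂ - b₁) := by
  by_cases hint : Integrable fun x => φ x * g' x
  swap
  · rw [integral_undef hint]
    exact mul_nonneg hK (sub_nonneg.2 ((hb 0).1.trans (hb 0).2))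
  refine le_of_tendsto
    (intervalIntegral_tendsto_integral hint tendsto_neg_atTop_atBot tendsto_id) ?_
  filter_upwards [eventually_ge_atTop 0] with R hR
  calc ∫ x in -R..R, φ x * g' x ≤ ∫ x in -R..R, K * g' x :=
        intervalIntegral.integral_mono_on (by linarith) hint.intervalIntegrable
          ((hg'.const_mul K).intervalIntegrable _ _)
          fun x _ => mul_le_mul_of_nonneg_right (hφ x) (hg'_nonneg x)
    _ = K * (g R - g (-R)) := by
        rw [intervalIntegral.integral_const_mul,
          intervalIntegral.integral_eq_sub_of_hasDerivAt (fun x _ => hg x)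
            (hg'.intervalIntegrable _ _)]
    _ ≤ K * (b₂ - b₁) := by
        gcongr
        exacts [(hb R).2, (hb (-R)).1]

theorem integral_sq_deriv_mul_deriv_comp_le {F u : ℝ → ℝ} {K b₁ b₂ : ℝ} (hF : ContDiff ℝ 1 F)
    (hu : ContDiff ℝ 1 u) (hF_mono : Monotone F) (hu_mono : Monotone u)
    (hK : ∀ x, deriv u x ≤ K) (hb : ∀ x, F (u x) ∈ Icc b₁ b₂) :
    ∫ x, deriv u x ^ 2 * deriv F (u x) ≤ K * (b₂ - b₁) := by
  have hFu : ∀ x, HasDerivAt (fun y => F (u y)) (deriv F (u x) * deriv u x) x := fun x =>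
    (hF.differentiable one_ne_zero (u x)).hasDerivAt.comp x
      (hu.differentiable one_ne_zero x).hasDerivAt
  calc ∫ x, deriv u x ^ 2 * deriv F (u x) = ∫ x, deriv u x * (deriv F (u x) * deriv u x) :=
        integral_congr_ae (ae_of_all _ fun x => by ring)
    _ ≤ K * (b₂ - b₁) := integral_mul_deriv_le_of_le hFu
        (((hF.continuous_deriv le_rfl).comp hu.continuous).mul (hu.continuous_deriv le_rfl))
        (fun x => mul_nonneg hF_mono.deriv_nonneg hu_mono.deriv_nonneg) hK
        (hu_mono.deriv_nonneg.trans (hK 0)) hb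

theorem stmt_12_general
    (σ c : ℝ) (hσ : 0 < σ) (hc : 0 < c)
    (a₁ a a₂ : ℝ) (ha₁ : a₁ < a) (ha₂ : a < a₂)
    (F : ℝ → ℝ) (hF : ContDiff ℝ 2 F) (hF_mono : Monotone F)
    (hfix₁ : F a₁ = a₁) (hfix₂ : F a₂ = a₂)
    (hbelow : ∀ t ∈ Ioo a₁ a, F t < t) (habove : ∀ t ∈ Ioo a a₂, t < F t)
    (u : ℝ → ℝ) (hu : ContDiff ℝ 2 u) (hu_mono : StrictMono u)
    (hlim₁ : Tendsto u atBot (nhds a₁)) (hlim₂ : Tendsto u atTop (nhds a₂))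
    (hlim₃ : Tendsto (deriv u) atBot (nhds 0))
    (hprofile2 : ∀ x, σ ^ 2 * deriv (deriv u) x =
      u x - ∫ s in Ioi (0 : ℝ), Real.exp (-s) * F (u (x + c * s)))
    (hEM : c = (∫ t in a₁..a₂, (t - F t)) / ∫ x, (deriv u x) ^ 2 * deriv F (u x)) :
    σ / (Real.sqrt 2 * (a₂ - a₁)) *
      ((∫ t in a₁..a₂, (t - F t)) / Real.sqrt (∫ t in a₁..a, (t - F t))) ≤ c := by
  set N := ∫ t in a₁..a₂, (t - F t)
  set M := ∫ t in a₁..a, (t - F t)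
  set I := ∫ x, (deriv u x) ^ 2 * deriv F (u x)
  have hu_range : ∀ x, u x ∈ Icc a₁ a₂ := fun x =>
    ⟨hu_mono.monotone.le_of_tendsto hlim₁ x, hu_mono.monotone.ge_of_tendsto hlim₂ x⟩
  have hFu_range : ∀ x, F (u x) ∈ Icc a₁ a₂ := fun x =>
    ⟨hfix₁ ▸ hF_mono (hu_range x).1, hfix₂ ▸ hF_mono (hu_range x).2⟩
  have hode : ∀ x, σ ^ 2 * deriv (deriv u) x ≤ u x - F (u x) := fun x => by
    rw [hprofile2 x, sub_le_sub_iff_left]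
    simpa using le_setIntegral_exp_neg_mul_of_monotone
      (hF_mono.comp (hu_mono.monotone.comp ((monotone_id.const_mul hc.le).const_add x)))
      fun s => (hFu_range (x + c * s)).2
  have hG : Continuous fun t => t - F t := continuous_id.sub hF.continuous
  have hM : 0 < M := intervalIntegral.intervalIntegral_pos_of_pos_on
    (hG.intervalIntegrable _ _) (fun t ht => sub_pos.2 (hbelow t ht)) ha₁
  have hslope : ∀ x, deriv u x ≤ Real.sqrt 2 * Real.sqrt M / σ :=
    deriv_le_of_ode hσ (hu.differentiable two_ne_zero) hu.differentiable_deriv_two hG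
      (fun x => hu_mono.monotone.deriv_nonneg) hode hlim₁ hlim₃ fun x =>
        intervalIntegral_le_of_sign_change hG ha₁ ha₂ (fun t ht => sub_nonneg.2 (hbelow t ht).le)
          (fun t ht => sub_nonpos.2 (habove t ht).le) (hu_range x)
  have hI : 0 < I := by
    have hI_nonneg : 0 ≤ I := integral_nonneg fun x => mul_nonneg (sq_nonneg _) hF_mono.deriv_nonneg
    refine hI_nonneg.lt_of_ne fun hI_zero => hc.ne' ?_
    rw [hEM, ← hI_zero, div_zero]
  have hI_le : I ≤ Real.sqrt 2 * Real.sqrt M / σ * (a₂ - a₁) :=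
    integral_sq_deriv_mul_deriv_comp_le (hF.of_le (by norm_num)) (hu.of_le (by norm_num))
      hF_mono hu_mono.monotone hslope hFu_range
  have hN : 0 < N := by rw [← (eq_div_iff hI.ne').1 hEM]; positivity
  have ha : a₂ - a₁ ≠ 0 := by linarith
  calc σ / (Real.sqrt 2 * (a₂ - a₁)) * (N / Real.sqrt M)
      = N / (Real.sqrt 2 * Real.sqrt M / σ * (a₂ - a₁)) := by field_simp
    _ ≤ N / I := div_le_div_of_nonneg_left hN.le hI hI_le
    _ = c := hEM.symm

/-- Lower bound on the wave speed (Proposition 4.2, lower bound): in the neural field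
traveling wave setting with two-sided exponential kernel and convex–concave gain `F`,
the Ermentrout–McLeod formula yields
`c ≥ (σ/(√2 (a₂−a₁))) (∫_{a₁}^{a₂} (t−F(t)) dt) / √(∫_{a₁}^{a} (t−F(t)) dt)`. -/
theorem stmt_12
    (σ c : ℝ) (hσ : 0 < σ) (hc : 0 < c)
    (a₁ a a₂ : ℝ) (ha₁ : a₁ < a) (ha₂ : a < a₂)
    (F : ℝ → ℝ) (hF : ContDiff ℝ 2 F) (hF_mono : Monotone F)
    (hfix₁ : F a₁ = a₁) (hfix : F a = a) (hfix₂ : F a₂ = a₂)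
    (hbelow : ∀ t ∈ Ioo a₁ a, F t < t) (habove : ∀ t ∈ Ioo a a₂, t < F t)
    (hcc : ∃ z : ℝ, (∀ x ≤ z, 0 ≤ deriv (deriv F) x) ∧ (∀ x, z ≤ x → deriv (deriv F) x ≤ 0))
    (u : ℝ → ℝ) (hu : ContDiff ℝ 2 u) (hu_mono : StrictMono u)
    (hlim₁ : Tendsto u atBot (nhds a₁)) (hlim₂ : Tendsto u atTop (nhds a₂))
    (hlim₃ : Tendsto (deriv u) atBot (nhds 0)) (hlim₄ : Tendsto (deriv u) atTop (nhds 0))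
    (hprofile : ∀ x, -c * deriv u x =
      -u x + ∫ y, 1 / (2 * σ) * Real.exp (-|x - y| / σ) * F (u y))
    (hprofile2 : ∀ x, σ ^ 2 * deriv (deriv u) x =
      u x - ∫ s in Ioi (0 : ℝ), Real.exp (-s) * F (u (x + c * s)))
    (hint : Integrable (fun x => (deriv u x) ^ 2 * deriv F (u x)))
    (hpos : 0 < ∫ x, (deriv u x) ^ 2 * deriv F (u x))
    (hEM : c = (∫ t in a₁..a₂, (t - F t)) / ∫ x, (deriv u x) ^ 2 * deriv F (u x)) :
    σ / (Real.sqrt 2 * (a₂ - a₁)) *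
      ((∫ t in a₁..a₂, (t - F t)) / Real.sqrt (∫ t in a₁..a, (t - F t))) ≤ c :=
  stmt_12_general σ c hσ hc a₁ a a₂ ha₁ ha₂ F hF hF_mono hfix₁ hfix₂ hbelow habove u hu hu_mono
    hlim₁ hlim₂ hlim₃ hprofile2 hEM
end

section
/- In the neural field traveling wave setting, assume c > 0, F is continuous and strictly increasing on (a₁,a₂), û is strictly increasing with range contained in (a₁,a₂), F(t) ≥ t for all t ∈ [a, a₂), and σ²û″(x) = û(x) − ∫₀^∞ e^{−s}F(û(x+cs))ds for all x. If x₀ ∈ ℝ satisfies û″(x₀) = 0, then F(û(x₀)) < û(x₀) and consequently û(x₀) < a. -/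
open MeasureTheory Set

/-! At an inflection point the profile equation reads `û(x₀) = ∫₀^∞ e^{-s} F(û(x₀ + cs)) ds`.
Since `c > 0` and `F ∘ û` is strictly increasing, the integrand exceeds `e^{-s} F(û(x₀))` for every
`s > 0`, and `∫₀^∞ e^{-s} ds = 1` gives `F(û(x₀)) < û(x₀)`. As `F(t) ≥ t` on `[a, a₂)`, this forces
`û(x₀) < a`. -/

open Real

theorem setIntegral_pos_of_forall_pos {X : Type*} [MeasurableSpace X] {μ : Measure X}
    {s : Set X} {f : X → ℝ} (hs : MeasurableSet s) (hμs : μ s ≠ 0) (hf : IntegrableOn f s μ)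
    (hpos : ∀ x ∈ s, 0 < f x) : 0 < ∫ x in s, f x ∂μ := by
  have hnonneg : 0 ≤ᵐ[μ.restrict s] f :=
    (ae_restrict_iff' hs).2 (ae_of_all _ fun x hx => (hpos x hx).le)
  have hsupport : Function.support f ∩ s = s := inter_eq_right.2 fun x hx => (hpos x hx).ne'
  rw [setIntegral_pos_iff_support_of_nonneg_ae hnonneg hf, hsupport]
  exact pos_iff_ne_zero.2 hμs

theorem integrableOn_exp_neg_mul_of_bounded {g : ℝ → ℝ} {M : ℝ} (hg : AEStronglyMeasurable g)
    (hM : ∀ s, ‖g s‖ ≤ M) : IntegrableOn (fun s => exp (-s) * g s) (Ioi 0) :=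
  (integrableOn_exp_neg_Ioi 0).mul_bdd hg.restrict (ae_of_all _ hM)

theorem lt_integral_exp_neg_mul {g : ℝ → ℝ} {b : ℝ}
    (hg : IntegrableOn (fun s => exp (-s) * g s) (Ioi 0)) (hlt : ∀ s > 0, b < g s) :
    b < ∫ s in Ioi 0, exp (-s) * g s := by
  have hb : ∫ s in Ioi (0 : ℝ), exp (-s) * b = b := by
    rw [integral_mul_const, integral_exp_neg_Ioi_zero, one_mul]
  have hb_int : IntegrableOn (fun s : ℝ => exp (-s) * b) (Ioi 0) :=
    (integrableOn_exp_neg_Ioi 0).mul_const b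
  have hdiff : 0 < ∫ s in Ioi (0 : ℝ), (exp (-s) * g s - exp (-s) * b) :=
    setIntegral_pos_of_forall_pos measurableSet_Ioi (by simp) (hg.sub hb_int)
      fun s hs => by nlinarith [exp_pos (-s), hlt s hs]
  rw [integral_sub hg hb_int, hb] at hdiff
  linarith

theorem stmt_15_general
    (σ c : ℝ) (hc : 0 < c)
    (a₁ a a₂ : ℝ)
    (F : ℝ → ℝ) (hF_cont : Continuous F) (hF_mono : StrictMonoOn F (Ioo a₁ a₂))
    (hFge : ∀ t, a ≤ t → t < a₂ → t ≤ F t)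
    (u : ℝ → ℝ) (hu_mono : StrictMono u)
    (hrange : ∀ x, u x ∈ Ioo a₁ a₂)
    (hprofile : ∀ x, σ ^ 2 * deriv (deriv u) x =
      u x - ∫ s in Ioi (0 : ℝ), Real.exp (-s) * F (u (x + c * s)))
    (x₀ : ℝ) (hx₀ : deriv (deriv u) x₀ = 0) :
    F (u x₀) < u x₀ ∧ u x₀ < a := by
  obtain ⟨M, hM⟩ :=
    isCompact_Icc.exists_bound_of_continuousOn (hF_cont.continuousOn (s := Icc a₁ a₂))
  have hmeas : Measurable fun s => F (u (x₀ + c * s)) :=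
    hF_cont.measurable.comp (hu_mono.monotone.measurable.comp (by fun_prop))
  have hint : IntegrableOn (fun s => exp (-s) * F (u (x₀ + c * s))) (Ioi 0) :=
    integrableOn_exp_neg_mul_of_bounded hmeas.aestronglyMeasurable
      fun s => hM _ (Ioo_subset_Icc_self (hrange _))
  have hfixed : u x₀ = ∫ s in Ioi (0 : ℝ), exp (-s) * F (u (x₀ + c * s)) := by
    linarith [hprofile x₀, show σ ^ 2 * deriv (deriv u) x₀ = 0 by rw [hx₀, mul_zero]]
  have hlt : F (u x₀) < u x₀ := (lt_integral_exp_neg_mul hint fun s hs =>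
    hF_mono (hrange x₀) (hrange _) (hu_mono (lt_add_of_pos_right x₀ (mul_pos hc hs)))).trans_eq
      hfixed.symm
  exact ⟨hlt, lt_of_not_ge fun h => (hFge _ h (hrange x₀).2).not_gt hlt⟩

/-- At an inflection point `x₀` of the (strictly increasing) traveling wave profile with
positive wave speed, `F(û(x₀)) < û(x₀)`, and consequently `û(x₀) < a`. -/
theorem stmt_15
    (σ c : ℝ) (hσ : 0 < σ) (hc : 0 < c)
    (a₁ a a₂ : ℝ) (ha₁ : a₁ < a) (ha₂ : a < a₂)
    (F : ℝ → ℝ) (hF_cont : Continuous F) (hF_mono : StrictMonoOn F (Ioo a₁ a₂))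
    (hFge : ∀ t, a ≤ t → t < a₂ → t ≤ F t)
    (u : ℝ → ℝ) (hu : ContDiff ℝ 2 u) (hu_mono : StrictMono u)
    (hrange : ∀ x, u x ∈ Ioo a₁ a₂)
    (hprofile : ∀ x, σ ^ 2 * deriv (deriv u) x =
      u x - ∫ s in Ioi (0 : ℝ), Real.exp (-s) * F (u (x + c * s)))
    (x₀ : ℝ) (hx₀ : deriv (deriv u) x₀ = 0) :
    F (u x₀) < u x₀ ∧ u x₀ < a :=
  stmt_15_general σ c hc a₁ a a₂ F hF_cont hF_mono hFge u hu_mono hrange hprofile x₀ hx₀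
end

section
/- Let w(x) = (1/(2σ))e^{−|x|/σ} with σ > 0, let F be C¹ with F′ ≥ 0, and let û ∈ C²(ℝ) satisfy û′ > 0, |û″(x)| ≤ (1/σ) û′(x) for all x, and the differentiated traveling wave identity (w∗(F′(û)û′))(x) = û′(x) − c û″(x) for all x. If x₀ ∈ ℝ satisfies û″(x₀) = 0, then ∫ û′(x)² F′(û(x)) dx ≥ 2σ û′(x₀)². -/
open MeasureTheory Set

/-! Since `|(log û′)′| ≤ 1/σ`, the slope decays at most exponentially away from `x₀`:
`û′(y) ≥ e^{−|x₀−y|/σ} û′(x₀)`. At the inflection point `x₀` the traveling wave identity reads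
`∫ w(x₀ − y) F′(û(y)) û′(y) dy = û′(x₀)`; multiplying by `2σ û′(x₀)` and using the lower bound
on one factor `û′(y)` inside the integral gives `2σ û′(x₀)² ≤ ∫ û′² F′(û)`. -/

theorem exp_neg_mul_abs_sub_mul_le_of_abs_deriv_le {f : ℝ → ℝ} {k : ℝ}
    (hf : Differentiable ℝ f) (hpos : ∀ x, 0 < f x) (hbound : ∀ x, |deriv f x| ≤ k * f x)
    (x y : ℝ) : Real.exp (-(k * |x - y|)) * f x ≤ f y := by
  have hlog : ∀ t ∈ (univ : Set ℝ),
      HasDerivWithinAt (fun t => Real.log (f t)) (deriv f t / f t) univ t := fun t _ =>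
    ((hf t).hasDerivAt.log (hpos t).ne').hasDerivWithinAt
  have hlog_bound : ∀ t ∈ (univ : Set ℝ), ‖deriv f t / f t‖ ≤ k := fun t _ => by
    rw [Real.norm_eq_abs, abs_div, abs_of_pos (hpos t), div_le_iff₀ (hpos t)]
    exact hbound t
  have hlip : |Real.log (f x) - Real.log (f y)| ≤ k * |x - y| := by
    simpa only [Real.norm_eq_abs] using
      convex_univ.norm_image_sub_le_of_norm_hasDerivWithin_le hlog hlog_bound
        (mem_univ y) (mem_univ x)
  calc Real.exp (-(k * |x - y|)) * f x
      = Real.exp (Real.log (f x) - k * |x - y|) := by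
        rw [Real.exp_sub, Real.exp_log (hpos x), Real.exp_neg]; ring
    _ ≤ Real.exp (Real.log (f y)) := Real.exp_le_exp.mpr (by linarith [(abs_le.mp hlip).2])
    _ = f y := Real.exp_log (hpos y)

theorem stmt_16_general
    (σ c : ℝ) (hσ : 0 < σ)
    (F : ℝ → ℝ) (hF' : ∀ x, 0 ≤ deriv F x)
    (u : ℝ → ℝ) (hu : ContDiff ℝ 2 u) (hu' : ∀ x, 0 < deriv u x)
    (hbend : ∀ x, |deriv (deriv u) x| ≤ 1 / σ * deriv u x)
    (hident : ∀ x, (∫ y, 1 / (2 * σ) * Real.exp (-|x - y| / σ) *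
        (deriv F (u y) * deriv u y)) = deriv u x - c * deriv (deriv u) x)
    (hint : Integrable (fun x => (deriv u x) ^ 2 * deriv F (u x)))
    (x₀ : ℝ) (hx₀ : deriv (deriv u) x₀ = 0) :
    2 * σ * (deriv u x₀) ^ 2 ≤ ∫ x, (deriv u x) ^ 2 * deriv F (u x) := by
  set f := deriv u
  set g := fun y => 1 / (2 * σ) * Real.exp (-|x₀ - y| / σ) * (deriv F (u y) * f y)
  have hf : Differentiable ℝ f := hu.differentiable_deriv_two
  have hdecay (y : ℝ) : Real.exp (-|x₀ - y| / σ) * f x₀ ≤ f y := by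
    simpa only [neg_div, one_div, inv_mul_eq_div] using
      exp_neg_mul_abs_sub_mul_le_of_abs_deriv_le hf hu' hbend x₀ y
  have hg : ∫ y, g y = f x₀ := by simpa only [hx₀, mul_zero, sub_zero] using hident x₀
  have hg_int : Integrable g := .of_integral_ne_zero (hg ▸ (hu' x₀).ne')
  have hpointwise (y : ℝ) : 2 * σ * f x₀ * g y ≤ f y ^ 2 * deriv F (u y) := by
    have hgy : 2 * σ * f x₀ * g y
        = Real.exp (-|x₀ - y| / σ) * f x₀ * (f y * deriv F (u y)) := by
      simp only [g]; field_simp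
    rw [hgy, sq, mul_assoc (f y)]
    exact mul_le_mul_of_nonneg_right (hdecay y) (mul_nonneg (hu' y).le (hF' (u y)))
  calc 2 * σ * f x₀ ^ 2 = ∫ y, 2 * σ * f x₀ * g y := by rw [integral_const_mul, hg]; ring
    _ ≤ ∫ x, f x ^ 2 * deriv F (u x) := integral_mono (hg_int.const_mul _) hint hpointwise

/-- Lower bound on the denominator of the Ermentrout–McLeod wave speed formula in terms of
the slope at an inflection point `x₀`: `∫ û′² F′(û) dx ≥ 2σ û′(x₀)²`, for the two-sided
exponential kernel `w(x) = (1/(2σ)) e^{−|x|/σ}`. -/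
theorem stmt_16
    (σ c : ℝ) (hσ : 0 < σ)
    (F : ℝ → ℝ) (hF : ContDiff ℝ 1 F) (hF' : ∀ x, 0 ≤ deriv F x)
    (u : ℝ → ℝ) (hu : ContDiff ℝ 2 u) (hu' : ∀ x, 0 < deriv u x)
    (hbend : ∀ x, |deriv (deriv u) x| ≤ 1 / σ * deriv u x)
    (hident : ∀ x, (∫ y, 1 / (2 * σ) * Real.exp (-|x - y| / σ) *
        (deriv F (u y) * deriv u y)) = deriv u x - c * deriv (deriv u) x)
    (hint : Integrable (fun x => (deriv u x) ^ 2 * deriv F (u x)))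
    (x₀ : ℝ) (hx₀ : deriv (deriv u) x₀ = 0) :
    2 * σ * (deriv u x₀) ^ 2 ≤ ∫ x, (deriv u x) ^ 2 * deriv F (u x) :=
  stmt_16_general σ c hσ F hF' u hu hu' hbend hident hint x₀ hx₀
end

section
/- Let F ∈ C²(ℝ) with ‖F″‖_∞ < ∞, let w ≥ 0 be a bounded probability density (∫ w dx = 1, ‖w‖_∞ < ∞), let 𝔪 : ℝ → (0,∞) satisfy ‖𝔪‖_∞ < ∞ and inf 𝔪 > 0, let û : ℝ → ℝ be measurable, and let v ∈ L²(ℝ). Define the Taylor rest term R(x) = ∫ w(x−y) [ F(û(y)+v(y)) − F(û(y)) − F′(û(y))v(y) ] dy. Then ∫ R(x)² 𝔪(x) dx ≤ (1/4) ‖w‖_∞ ‖F″‖²_∞ ( ‖𝔪‖_∞ / (inf 𝔪)² ) ( ∫ v(x)² 𝔪(x) dx )². -/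
open MeasureTheory Set

/-!
By Taylor's formula the integrand of `R` is bounded by `(B/2) v²`, so `|R| ≤ I := w ⋆ ((B/2) v²)`.
Since `w ≤ Cw`, `I ≤ Cw ∫ (B/2) v²` pointwise, hence `R² m ≤ m₁ I² ≤ Cw m₁ (∫ (B/2) v²) I`, and
integrating with `∫ I = (∫ w)(∫ (B/2) v²) = ∫ (B/2) v²` gives `∫ R² m ≤ Cw m₁ (B/2)² (∫ v²)²`.
Finally `m₀ ∫ v² ≤ ∫ v² m`.
-/

theorem abs_taylor_one_remainder_le {F : ℝ → ℝ} (hF : ContDiff ℝ 2 F) {B : ℝ}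
    (hB : ∀ x, |deriv (deriv F) x| ≤ B) (a h : ℝ) :
    |F (a + h) - F a - deriv F a * h| ≤ B / 2 * h ^ 2 := by
  rcases eq_or_ne h 0 with rfl | hh
  · simp
  have hne : a ≠ a + h := by simpa using hh
  obtain ⟨ξ, -, hξ⟩ := taylor_mean_remainder_lagrange_iteratedDeriv (n := 1) hne hF.contDiffOn
  have hpoly : taylorWithinEval F 1 (uIcc a (a + h)) a (a + h) = F a + deriv F a * h := by
    rw [taylorWithinEval_succ, taylor_within_zero_eval, iteratedDerivWithin_one,
      ((hF.differentiable two_ne_zero) a).derivWithin (uniqueDiffOn_uIcc hne a left_mem_uIcc)]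
    simp [mul_comm]
  rw [hpoly, iteratedDeriv_succ, iteratedDeriv_one] at hξ
  rw [sub_sub, hξ]
  norm_num [abs_mul, abs_div]
  linarith [mul_le_mul_of_nonneg_right (hB ξ) (sq_nonneg h)]

theorem integral_le_integral_mul_div {α : Type*} [MeasurableSpace α] {μ : Measure α}
    {f m : α → ℝ} {m₀ m₁ : ℝ} (hf : Integrable f μ) (hf_nonneg : ∀ x, 0 ≤ f x)
    (hm : AEStronglyMeasurable m μ) (hm₀ : 0 < m₀) (hm_lower : ∀ x, m₀ ≤ m x)
    (hm_upper : ∀ x, m x ≤ m₁) :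
    ∫ x, f x ∂μ ≤ (∫ x, f x * m x ∂μ) / m₀ := by
  have hfm : Integrable (fun x => f x * m x) μ :=
    hf.mul_bdd hm (ae_of_all _ fun x => by
      rw [Real.norm_eq_abs, abs_of_pos (hm₀.trans_le (hm_lower x))]
      exact hm_upper x)
  rw [le_div_iff₀ hm₀, ← integral_mul_const]
  exact integral_mono (hf.mul_const m₀) hfm fun x =>
    mul_le_mul_of_nonneg_left (hm_lower x) (hf_nonneg x)

theorem integral_comp_sub_mul_le {G : Type*} [MeasurableSpace G] [Sub G] {μ : Measure G}
    {w f : G → ℝ} {Cw : ℝ} (hw_nonneg : ∀ x, 0 ≤ w x) (hCw : ∀ x, w x ≤ Cw)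
    (hf_nonneg : ∀ y, 0 ≤ f y) (hf : Integrable f μ) (x : G) :
    ∫ y, w (x - y) * f y ∂μ ≤ Cw * ∫ y, f y ∂μ := by
  rw [← integral_const_mul]
  exact integral_mono_of_nonneg (ae_of_all _ fun y => mul_nonneg (hw_nonneg _) (hf_nonneg y))
    (hf.const_mul Cw) (ae_of_all _ fun y => mul_le_mul_of_nonneg_right (hCw _) (hf_nonneg y))

theorem integral_comp_sub_mul_eq_convolution {G : Type*} [MeasurableSpace G] [Sub G]
    {μ : Measure G} {w f : G → ℝ} (x : G) :
    ∫ y, w (x - y) * f y ∂μ = convolution f w (ContinuousLinearMap.mul ℝ ℝ) μ x := by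
  simp only [convolution_def, ContinuousLinearMap.mul_apply', mul_comm]

section Kernel

variable {G : Type*} [MeasurableSpace G] [AddCommGroup G] [MeasurableAdd₂ G] [MeasurableNeg G]
  {μ : Measure G} [SFinite μ] [μ.IsAddLeftInvariant] {w f : G → ℝ}

theorem integrable_comp_sub_mul_s17 {Cw : ℝ} (hw : AEStronglyMeasurable w μ)
    (hw_nonneg : ∀ x, 0 ≤ w x) (hCw : ∀ x, w x ≤ Cw) (hf : Integrable f μ) (x : G) :
    Integrable (fun y => w (x - y) * f y) μ :=
  hf.bdd_mul (hw.comp_quasiMeasurePreserving (quasiMeasurePreserving_sub_left μ x))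
    (ae_of_all _ fun y => by
      simpa [Real.norm_eq_abs, abs_of_nonneg (hw_nonneg _)] using hCw (x - y))

theorem integrable_integral_comp_sub_mul (hw : Integrable w μ) (hf : Integrable f μ) :
    Integrable (fun x => ∫ y, w (x - y) * f y ∂μ) μ := by
  simpa only [integral_comp_sub_mul_eq_convolution] using hf.integrable_convolution _ hw

theorem integral_integral_comp_sub_mul (hw : Integrable w μ) (hf : Integrable f μ) :
    ∫ x, ∫ y, w (x - y) * f y ∂μ ∂μ = (∫ x, w x ∂μ) * ∫ y, f y ∂μ := by
  simp_rw [integral_comp_sub_mul_eq_convolution]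
  rw [integral_convolution _ hf hw, ContinuousLinearMap.mul_apply', mul_comm]

theorem integral_sq_integral_comp_sub_mul_mul_le {g m : G → ℝ} {Cw m₁ : ℝ}
    (hw : Integrable w μ) (hw_nonneg : ∀ x, 0 ≤ w x) (hw_one : ∫ x, w x ∂μ = 1)
    (hCw : ∀ x, w x ≤ Cw) (hf : Integrable f μ) (hg : ∀ y, |g y| ≤ f y)
    (hm_nonneg : ∀ x, 0 ≤ m x) (hm_upper : ∀ x, m x ≤ m₁) :
    ∫ x, (∫ y, w (x - y) * g y ∂μ) ^ 2 * m x ∂μ ≤ Cw * m₁ * (∫ y, f y ∂μ) ^ 2 := by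
  have hf_nonneg : ∀ y, 0 ≤ f y := fun y => (abs_nonneg _).trans (hg y)
  set S := ∫ y, f y ∂μ
  set I := fun x => ∫ y, w (x - y) * f y ∂μ
  have hI_nonneg : ∀ x, 0 ≤ I x := fun x =>
    integral_nonneg fun y => mul_nonneg (hw_nonneg _) (hf_nonneg y)
  have hI_le : ∀ x, I x ≤ Cw * S := integral_comp_sub_mul_le hw_nonneg hCw hf_nonneg hf
  have hR_le : ∀ x, |∫ y, w (x - y) * g y ∂μ| ≤ I x := fun x =>
    (abs_integral_le_integral_abs).trans <|
      integral_mono_of_nonneg (ae_of_all _ fun y => abs_nonneg _)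
        (integrable_comp_sub_mul_s17 hw.aestronglyMeasurable hw_nonneg hCw hf x)
        (ae_of_all _ fun y => by
          dsimp only
          rw [abs_mul, abs_of_nonneg (hw_nonneg _)]
          exact mul_le_mul_of_nonneg_left (hg y) (hw_nonneg _))
  have hpointwise : ∀ x, (∫ y, w (x - y) * g y ∂μ) ^ 2 * m x ≤ Cw * m₁ * S * I x := fun x =>
    calc (∫ y, w (x - y) * g y ∂μ) ^ 2 * m x ≤ I x ^ 2 * m₁ := by
          rw [← sq_abs]
          exact mul_le_mul (pow_le_pow_left₀ (abs_nonneg _) (hR_le x) 2) (hm_upper x)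
            (hm_nonneg x) (sq_nonneg _)
      _ ≤ (Cw * S) * I x * m₁ := by
          rw [sq]
          exact mul_le_mul_of_nonneg_right (mul_le_mul_of_nonneg_right (hI_le x) (hI_nonneg x))
            ((hm_nonneg x).trans (hm_upper x))
      _ = Cw * m₁ * S * I x := by ring
  calc ∫ x, (∫ y, w (x - y) * g y ∂μ) ^ 2 * m x ∂μ ≤ ∫ x, Cw * m₁ * S * I x ∂μ :=
        integral_mono_of_nonneg (ae_of_all _ fun x => mul_nonneg (sq_nonneg _) (hm_nonneg x))
          ((integrable_integral_comp_sub_mul hw hf).const_mul _) (ae_of_all _ hpointwise)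
    _ = Cw * m₁ * S ^ 2 := by
        rw [integral_const_mul, integral_integral_comp_sub_mul hw hf, hw_one]
        ring

end Kernel

theorem stmt_17_general
    (F : ℝ → ℝ) (hF : ContDiff ℝ 2 F)
    (B : ℝ) (hB : ∀ x, |deriv (deriv F) x| ≤ B)
    (w : ℝ → ℝ) (hw_nonneg : ∀ x, 0 ≤ w x)
    (hw_int : Integrable w) (hw_prob : (∫ x, w x) = 1)
    (Cw : ℝ) (hCw : ∀ x, w x ≤ Cw)
    (m : ℝ → ℝ) (hm_meas : Measurable m)
    (m₀ m₁ : ℝ) (hm₀ : 0 < m₀) (hm_lower : ∀ x, m₀ ≤ m x) (hm_upper : ∀ x, m x ≤ m₁)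
    (u : ℝ → ℝ)
    (v : ℝ → ℝ) (hv : MemLp v 2 volume) :
    (∫ x, (∫ y, w (x - y) * (F (u y + v y) - F (u y) - deriv F (u y) * v y)) ^ 2 * m x) ≤
      1 / 4 * Cw * B ^ 2 * (m₁ / m₀ ^ 2) * (∫ x, (v x) ^ 2 * m x) ^ 2 := by
  have hB0 : 0 ≤ B := (abs_nonneg _).trans (hB 0)
  have hv2 : Integrable (fun y => v y ^ 2) := hv.integrable_sq
  have hCwm₁ : 0 ≤ Cw * m₁ :=
    mul_nonneg ((hw_nonneg 0).trans (hCw 0)) (hm₀.le.trans ((hm_lower 0).trans (hm_upper 0)))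
  have hR := integral_sq_integral_comp_sub_mul_mul_le hw_int hw_nonneg hw_prob hCw
    (hv2.const_mul (B / 2)) (fun y => abs_taylor_one_remainder_le hF hB (u y) (v y))
    (fun x => hm₀.le.trans (hm_lower x)) hm_upper
  have hv2_le := integral_le_integral_mul_div hv2 (fun y => sq_nonneg (v y))
    hm_meas.aestronglyMeasurable hm₀ hm_lower hm_upper
  calc _ ≤ Cw * m₁ * (B / 2 * ∫ y, v y ^ 2) ^ 2 := by rwa [← integral_const_mul]
    _ ≤ Cw * m₁ * (B / 2 * ((∫ x, v x ^ 2 * m x) / m₀)) ^ 2 := by gcongr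
    _ = _ := by field_simp; ring

/-- Estimate (4.3) on the Taylor rest term
`R(x) = ∫ w(x−y)[F(û(y)+v(y)) − F(û(y)) − F′(û(y))v(y)] dy`:
`∫ R² 𝔪 dx ≤ (1/4)‖w‖_∞‖F″‖²_∞ (‖𝔪‖_∞/(inf 𝔪)²) (∫ v² 𝔪 dx)²`. -/
theorem stmt_17
    (F : ℝ → ℝ) (hF : ContDiff ℝ 2 F)
    (B : ℝ) (hB : ∀ x, |deriv (deriv F) x| ≤ B)
    (w : ℝ → ℝ) (hw_meas : Measurable w) (hw_nonneg : ∀ x, 0 ≤ w x)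
    (hw_int : Integrable w) (hw_prob : (∫ x, w x) = 1)
    (Cw : ℝ) (hCw : ∀ x, w x ≤ Cw)
    (m : ℝ → ℝ) (hm_meas : Measurable m) (hm_pos : ∀ x, 0 < m x)
    (m₀ m₁ : ℝ) (hm₀ : 0 < m₀) (hm_lower : ∀ x, m₀ ≤ m x) (hm_upper : ∀ x, m x ≤ m₁)
    (u : ℝ → ℝ) (hu_meas : Measurable u)
    (v : ℝ → ℝ) (hv_meas : Measurable v) (hv : MemLp v 2 volume) :
    (∫ x, (∫ y, w (x - y) * (F (u y + v y) - F (u y) - deriv F (u y) * v y)) ^ 2 * m x) ≤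
      1 / 4 * Cw * B ^ 2 * (m₁ / m₀ ^ 2) * (∫ x, (v x) ^ 2 * m x) ^ 2 :=
  stmt_17_general F hF B hB w hw_nonneg hw_int hw_prob Cw hCw m hm_meas m₀ m₁ hm₀ hm_lower hm_upper
    u v hv
end

section
/- Let ρ : ℝ → (0,∞) be measurable with lim_{y→−∞} ρ(y) = 0 and suppose there exists L_ρ > 0 such that ρ(y) ≤ L_ρ ρ(x) whenever y ≤ x. Let w : ℝ → [0,∞) be measurable with ∫₀^∞ w(x)² dx > 0. Then (∫_ℝ w(x−y)² ρ(x) dx) / ρ(y)² → ∞ as y → −∞; more precisely, for every y, ∫_ℝ w(x−y)² ρ(x) dx ≥ ( ∫₀^∞ w(x)² dx / L_ρ ) · ρ(y), and hence the ratio tends to infinity as y → −∞. -/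
open MeasureTheory Filter Set

/-!
On the half-line `x > y` the almost-monotonicity of `ρ` gives `ρ x ≥ ρ y / L_ρ`, and by
translation invariance `∫_{x > y} w(x - y)² dx = ∫₀^∞ w²`; this yields the linear lower bound in
`ρ y`. Dividing by `ρ(y)²` leaves a constant multiple of `1 / ρ y`, which blows up as `ρ y → 0⁺`.
-/

theorem ofReal_integral_le_lintegral_ofReal {α : Type*} [MeasurableSpace α] {μ : Measure α}
    {f : α → ℝ} (hf : 0 ≤ᵐ[μ] f) :
    ENNReal.ofReal (∫ x, f x ∂μ) ≤ ∫⁻ x, ENNReal.ofReal (f x) ∂μ :=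
  (Real.ofReal_le_enorm _).trans <| (enorm_integral_le_lintegral_enorm f).trans_eq <|
    lintegral_congr_ae <| hf.mono fun _ hx ↦ Real.enorm_eq_ofReal hx

theorem setLIntegral_Ioi_comp_sub (f : ℝ → ENNReal) (y : ℝ) :
    ∫⁻ x in Ioi y, f (x - y) = ∫⁻ x in Ioi 0, f x := by
  have h := (measurePreserving_sub_right volume y).setLIntegral_comp_preimage_emb
    (measurableEmbedding_subRight y) f (Ioi 0)
  rwa [preimage_sub_const_Ioi, zero_add] at h

theorem ofReal_le_lintegral_comp_sub_mul {ρ : ℝ → ℝ} {L : ℝ} (hL : 0 < L)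
    (hρ : ∀ x y : ℝ, y ≤ x → ρ y ≤ L * ρ x) {g : ℝ → ℝ} (hg : 0 ≤ g) (y : ℝ) :
    ENNReal.ofReal ((∫ x in Ioi 0, g x) / L * ρ y) ≤ ∫⁻ x, ENNReal.ofReal (g (x - y) * ρ x) := by
  have hρy : ∀ x ∈ Ioi y, ρ y / L ≤ ρ x := fun x hx ↦ by
    rw [div_le_iff₀ hL, mul_comm]
    exact hρ x y (le_of_lt hx)
  calc ENNReal.ofReal ((∫ x in Ioi 0, g x) / L * ρ y)
      = ENNReal.ofReal (∫ x in Ioi 0, g x) * ENNReal.ofReal (ρ y / L) := by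
        rw [← ENNReal.ofReal_mul (integral_nonneg hg), div_mul_eq_mul_div, mul_div_assoc]
    _ ≤ (∫⁻ x in Ioi y, ENNReal.ofReal (g (x - y))) * ENNReal.ofReal (ρ y / L) := by
        rw [setLIntegral_Ioi_comp_sub (fun x ↦ ENNReal.ofReal (g x))]
        gcongr
        exact ofReal_integral_le_lintegral_ofReal (ae_of_all _ hg)
    _ = ∫⁻ x in Ioi y, ENNReal.ofReal (g (x - y)) * ENNReal.ofReal (ρ y / L) :=
        (lintegral_mul_const' _ _ ENNReal.ofReal_ne_top).symm
    _ ≤ ∫⁻ x in Ioi y, ENNReal.ofReal (g (x - y) * ρ x) := by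
        refine setLIntegral_mono' measurableSet_Ioi fun x hx ↦ ?_
        rw [← ENNReal.ofReal_mul (hg _)]
        exact ENNReal.ofReal_le_ofReal (mul_le_mul_of_nonneg_left (hρy x hx) (hg _))
    _ ≤ ∫⁻ x, ENNReal.ofReal (g (x - y) * ρ x) := setLIntegral_le_lintegral _ _

theorem tendsto_div_ofReal_sq_atTop {α : Type*} {l : Filter α} {ρ : α → ℝ} {F : α → ENNReal}
    (hρ_pos : ∀ y, 0 < ρ y) (hρ : Tendsto ρ l (nhds 0)) {c : ℝ} (hc : 0 < c)
    (hF : ∀ y, ENNReal.ofReal (c * ρ y) ≤ F y) :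
    Tendsto (fun y ↦ F y / ENNReal.ofReal (ρ y ^ 2)) l (nhds ⊤) := by
  have hρ' : Tendsto ρ l (nhdsWithin 0 (Ioi 0)) :=
    tendsto_nhdsWithin_of_tendsto_nhds_of_eventually_within _ hρ (Eventually.of_forall hρ_pos)
  have hdiv : Tendsto (fun y ↦ c / ρ y) l atTop := by
    simpa only [div_eq_mul_inv, Function.comp_def] using
      (tendsto_inv_nhdsGT_zero.comp hρ').const_mul_atTop hc
  refine tendsto_nhds_top_mono (ENNReal.tendsto_ofReal_atTop.comp hdiv)
    (Eventually.of_forall fun y ↦ ?_)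
  have hρy := hρ_pos y
  calc ENNReal.ofReal (c / ρ y) = ENNReal.ofReal (c * ρ y) / ENNReal.ofReal (ρ y ^ 2) := by
        rw [← ENNReal.ofReal_div_of_pos (by positivity)]
        congr 1
        field_simp
    _ ≤ F y / ENNReal.ofReal (ρ y ^ 2) := ENNReal.div_le_div_right (hF y) _

theorem stmt_18_general
    (ρ : ℝ → ℝ) (hρ_pos : ∀ x, 0 < ρ x)
    (hρ_lim : Tendsto ρ atBot (nhds 0))
    (Lρ : ℝ) (hLρ : 0 < Lρ) (hmono : ∀ x y : ℝ, y ≤ x → ρ y ≤ Lρ * ρ x)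
    (w : ℝ → ℝ)
    (hw_pos : 0 < ∫ x in Ioi (0 : ℝ), (w x) ^ 2) :
    (∀ y : ℝ, ENNReal.ofReal ((∫ x in Ioi (0 : ℝ), (w x) ^ 2) / Lρ * ρ y) ≤
      ∫⁻ x, ENNReal.ofReal ((w (x - y)) ^ 2 * ρ x)) ∧
    Tendsto (fun y => (∫⁻ x, ENNReal.ofReal ((w (x - y)) ^ 2 * ρ x)) /
      ENNReal.ofReal ((ρ y) ^ 2)) atBot (nhds ⊤) := by
  have hbound := ofReal_le_lintegral_comp_sub_mul hLρ hmono (g := fun x ↦ w x ^ 2)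
    (fun x ↦ sq_nonneg (w x))
  exact ⟨hbound, tendsto_div_ofReal_sq_atTop hρ_pos hρ_lim (div_pos hw_pos hLρ) hbound⟩

/-- The quadratic rest term cannot be controlled in `L²(ρ)` when `ρ` vanishes at `−∞`:
for every `y`, `∫ w(x−y)² ρ(x) dx ≥ ((∫₀^∞ w²)/L_ρ) ρ(y)`, and hence
`(∫ w(x−y)² ρ(x) dx)/ρ(y)² → ∞` as `y → −∞`. -/
theorem stmt_18
    (ρ : ℝ → ℝ) (hρ_meas : Measurable ρ) (hρ_pos : ∀ x, 0 < ρ x)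
    (hρ_lim : Tendsto ρ atBot (nhds 0))
    (Lρ : ℝ) (hLρ : 0 < Lρ) (hmono : ∀ x y : ℝ, y ≤ x → ρ y ≤ Lρ * ρ x)
    (w : ℝ → ℝ) (hw_meas : Measurable w) (hw_nonneg : ∀ x, 0 ≤ w x)
    (hw_pos : 0 < ∫ x in Ioi (0 : ℝ), (w x) ^ 2) :
    (∀ y : ℝ, ENNReal.ofReal ((∫ x in Ioi (0 : ℝ), (w x) ^ 2) / Lρ * ρ y) ≤
      ∫⁻ x, ENNReal.ofReal ((w (x - y)) ^ 2 * ρ x)) ∧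
    Tendsto (fun y => (∫⁻ x, ENNReal.ofReal ((w (x - y)) ^ 2 * ρ x)) /
      ENNReal.ofReal ((ρ y) ^ 2)) atBot (nhds ⊤) :=
  stmt_18_general ρ hρ_pos hρ_lim Lρ hLρ hmono w hw_pos
end
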